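/- arXiv:math/0602131 — 9 statements merged into one kernel-verified Lean document; each statement's English description precedes it below -/
import Mathlib

section
/- Let G be a nilpotent group and N a normal torsion-free subgroup of G. If x ∈ G, y ∈ N, and n is a positive integer such that [x^n, y] = e, then [x, y] = e. -/
open scoped commutatorElement

/-!
Nilpotent groups are Engel groups: the iterated commutators `y₀ = y`, `yₖ₊₁ = ⁅x, yₖ⁆` eventually
vanish, since `yₖ` lies in the `k`-th term of the lower central series. Every `yₖ` lies in `N` and
commutes with `x ^ n`. Going down from the vanishing index: once `x` commutes with `⁅x, yₖ⁆`, we get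
`⁅x, yₖ⁆ ^ n = ⁅x ^ n, yₖ⁆ = 1`, so `⁅x, yₖ⁆` is a torsion element of `N`, hence trivial.
-/

section

variable {G : Type*} [Group G]

theorem Commute.commutatorElement_right {a x y : G} (hx : Commute a x) (hy : Commute a y) :
    Commute a ⁅x, y⁆ := by
  rw [commutatorElement_def]
  exact ((hx.mul_right hy).mul_right hx.inv_right).mul_right hy.inv_right

theorem commutatorElement_pow_left_of_commute {x y : G} (hc : Commute x ⁅x, y⁆) (k : ℕ) :
    ⁅x ^ k, y⁆ = ⁅x, y⁆ ^ k := by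
  induction k with
  | zero => simp
  | succ k ih =>
    have hsplit : ⁅x ^ (k + 1), y⁆ = x * ⁅x ^ k, y⁆ * x⁻¹ * ⁅x, y⁆ := by
      rw [pow_succ']
      group
    rw [hsplit, ih, (hc.pow_right k).eq, mul_inv_cancel_right, ← pow_succ]

theorem iterate_commutatorElement_mem_lowerCentralSeries (x y : G) (k : ℕ) :
    (fun z ↦ ⁅x, z⁆)^[k] y ∈ (⊤ : Subgroup G).lowerCentralSeries k := by
  induction k with
  | zero => exact Subgroup.mem_top y
  | succ k ih =>
    rw [Function.iterate_succ_apply', Subgroup.lowerCentralSeries_succ, Subgroup.commutator_comm]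
    exact Subgroup.commutator_mem_commutator (Subgroup.mem_top x) ih

theorem Group.IsNilpotent.exists_iterate_commutatorElement_eq_one [Group.IsNilpotent G]
    (x y : G) : ∃ k, (fun z ↦ ⁅x, z⁆)^[k] y = 1 := by
  obtain ⟨k, hk⟩ := Subgroup.nilpotent_iff_lowerCentralSeries.mp ‹Group.IsNilpotent G›
  have hmem := iterate_commutatorElement_mem_lowerCentralSeries x y k
  rw [hk, Subgroup.mem_bot] at hmem
  exact ⟨k, hmem⟩

section TorsionFreeNormal

variable {N : Subgroup G} [N.Normal]

theorem Subgroup.commutatorElement_mem_of_right_mem (x : G) {y : G} (hy : y ∈ N) :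
    ⁅x, y⁆ ∈ N :=
  Subgroup.commutator_le_right ⊤ N
    (Subgroup.commutator_mem_commutator (Subgroup.mem_top x) hy)

variable {x : G} {n : ℕ}

theorem commute_of_commute_pow_of_commute_commutatorElement
    (hN : ∀ y ∈ N, y ≠ 1 → ¬ IsOfFinOrder y) (hn : 0 < n) {z : G} (hz : z ∈ N)
    (hxn : Commute (x ^ n) z) (hx : Commute x ⁅x, z⁆) : Commute x z := by
  rw [← commutatorElement_eq_one_iff_commute]
  by_contra hne
  have hpow : ⁅x, z⁆ ^ n = 1 := by
    rw [← commutatorElement_pow_left_of_commute hx, hxn.commutator_eq]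
  exact hN _ (Subgroup.commutatorElement_mem_of_right_mem x hz) hne
    (isOfFinOrder_iff_pow_eq_one.mpr ⟨n, hn, hpow⟩)

theorem commute_of_commute_pow_of_iterate_commutatorElement_eq_one
    (hN : ∀ y ∈ N, y ≠ 1 → ¬ IsOfFinOrder y) (hn : 0 < n) :
    ∀ (k : ℕ) {z : G}, z ∈ N → Commute (x ^ n) z → (fun w ↦ ⁅x, w⁆)^[k] z = 1 → Commute x z
  | 0, z, _, _, hk => by
    rw [Function.iterate_zero_apply] at hk
    rw [hk]
    exact Commute.one_right x
  | k + 1, z, hz, hxn, hk =>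
    have hx : Commute x ⁅x, z⁆ :=
      commute_of_commute_pow_of_iterate_commutatorElement_eq_one hN hn k
        (Subgroup.commutatorElement_mem_of_right_mem x hz)
        (((Commute.refl x).pow_left n).commutatorElement_right hxn) hk
    commute_of_commute_pow_of_commute_commutatorElement hN hn hz hxn hx

end TorsionFreeNormal

end

theorem stmt_0 {G : Type*} [Group G] [Group.IsNilpotent G]
    (N : Subgroup G) (hN : N.Normal)
    (hNtf : ∀ y ∈ N, y ≠ 1 → ¬ IsOfFinOrder y)
    (x : G) (y : G) (hy : y ∈ N) (n : ℕ) (hn : 0 < n)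
    (h : ⁅x ^ n, y⁆ = 1) : ⁅x, y⁆ = 1 := by
  obtain ⟨k, hk⟩ := Group.IsNilpotent.exists_iterate_commutatorElement_eq_one x y
  exact (commute_of_commute_pow_of_iterate_commutatorElement_eq_one hNtf hn k hy
    (commutatorElement_eq_one_iff_commute.mp h) hk).commutator_eq
end

section
/- Let G be a nilpotent group with G = Z_i(G)·H for a subgroup H and some i ≥ 1, where Z_i(G) is the i-th term of the upper central series. Then γ_{i+1}(H) = γ_{i+1}(G), where γ_j denotes the lower central series. -/
/-!
Write `Z_n` for the upper central series; `lowerCentralSeries j` is `γ_{j+1}`. By the three subgroups lemma,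
`⁅Z_{n+j+1}, γ_{j+1}(G)⁆ ≤ Z_n`. Expanding commutators of products then shows by induction on `j`
that `G = H Z_{n+j}` forces `γ_{j+1}(G) ≤ γ_{j+1}(H) Z_n`; taking `n = 0` gives `γ_{i+1}(G) ≤ γ_{i+1}(H)`.
-/

open scoped commutatorElement

namespace Subgroup

variable {G : Type*} [Group G]

theorem lowerCentralSeries_le_of_le {S T : Subgroup G} (h : S ≤ T) (n : ℕ) :
    S.lowerCentralSeries n ≤ T.lowerCentralSeries n := by
  induction n with
  | zero => exact h
  | succ n ih => exact commutator_mono ih h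

theorem commutator_commutator_le_of_rotate {H₁ H₂ H₃ K : Subgroup G} [K.Normal]
    (h1 : ⁅⁅H₂, H₃⁆, H₁⁆ ≤ K) (h2 : ⁅⁅H₃, H₁⁆, H₂⁆ ≤ K) : ⁅⁅H₁, H₂⁆, H₃⁆ ≤ K := by
  have le_iff_map_eq_bot : ∀ A B C : Subgroup G,
      ⁅⁅A, B⁆, C⁆ ≤ K ↔ ⁅⁅A.map (QuotientGroup.mk' K), B.map (QuotientGroup.mk' K)⁆,
        C.map (QuotientGroup.mk' K)⁆ = ⊥ := by
    intro A B C
    rw [← map_commutator, ← map_commutator, map_eq_bot_iff, QuotientGroup.ker_mk']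
  rw [le_iff_map_eq_bot] at h1 h2 ⊢
  exact commutator_commutator_eq_bot_of_rotate h1 h2

theorem commutator_upperCentralSeries_lowerCentralSeries_le (j n : ℕ) :
    ⁅upperCentralSeries G (n + j + 1), (⊤ : Subgroup G).lowerCentralSeries j⁆ ≤
      upperCentralSeries G n := by
  induction j generalizing n with
  | zero => exact commutator_upperCentralSeries_top_le G n
  | succ j ih =>
    rw [lowerCentralSeries_succ, commutator_comm]
    apply commutator_commutator_le_of_rotate
    · calc ⁅⁅⊤, upperCentralSeries G (n + (j + 1) + 1)⁆, (⊤ : Subgroup G).lowerCentralSeries j⁆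
          ≤ ⁅upperCentralSeries G (n + j + 1), (⊤ : Subgroup G).lowerCentralSeries j⁆ := by
            rw [commutator_comm ⊤]
            exact commutator_mono (commutator_upperCentralSeries_top_le G _) le_rfl
        _ ≤ upperCentralSeries G n := ih n
    · calc ⁅⁅upperCentralSeries G (n + (j + 1) + 1), (⊤ : Subgroup G).lowerCentralSeries j⁆, ⊤⁆
          ≤ ⁅upperCentralSeries G (n + 1), ⊤⁆ := by
            refine commutator_mono ?_ le_rfl
            convert ih (n + 1) using 3
            omega
        _ ≤ upperCentralSeries G n := commutator_upperCentralSeries_top_le G n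

theorem commutator_sup_sup_le {A B M L N : Subgroup G} [M.Normal] [L.Normal] [N.Normal]
    (hM : ⁅M, ⊤⁆ ≤ N) (hL : ⁅A, L⁆ ≤ N) : ⁅A ⊔ M, B ⊔ L⁆ ≤ ⁅A, B⁆ ⊔ N := by
  rw [commutator_le]
  intro x hx y hy
  obtain ⟨a, ha, m, hm, rfl⟩ := mem_sup_of_normal_right.mp hx
  obtain ⟨b, hb, l, hl, rfl⟩ := mem_sup_of_normal_right.mp hy
  have hmN : ⁅m, b * l⁆ ∈ N := hM (commutator_mem_commutator hm (mem_top _))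
  have hlN : ⁅a, l⁆ ∈ N := hL (commutator_mem_commutator ha hl)
  have expand : ⁅a * m, b * l⁆ = (a * ⁅m, b * l⁆ * a⁻¹) * (⁅a, b⁆ * (b * ⁅a, l⁆ * b⁻¹)) := by
    group
  rw [expand]
  refine mul_mem (mem_sup_right (Normal.conj_mem ‹_› _ hmN a)) (mul_mem ?_ ?_)
  · exact mem_sup_left (commutator_mem_commutator ha hb)
  · exact mem_sup_right (Normal.conj_mem ‹_› _ hlN b)

theorem lowerCentralSeries_le_sup_upperCentralSeries {H : Subgroup G} (j n : ℕ)
    (hGH : ⊤ ≤ H ⊔ upperCentralSeries G (n + j)) :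
    (⊤ : Subgroup G).lowerCentralSeries j ≤ H.lowerCentralSeries j ⊔ upperCentralSeries G n := by
  induction j generalizing n with
  | zero => simpa using hGH
  | succ j ih =>
    have hA : ⁅H.lowerCentralSeries j, upperCentralSeries G (n + (j + 1))⁆ ≤
        upperCentralSeries G n := by
      rw [commutator_comm]
      exact (commutator_mono le_rfl (lowerCentralSeries_le_of_le le_top j)).trans
        (commutator_upperCentralSeries_lowerCentralSeries_le j n)
    calc (⊤ : Subgroup G).lowerCentralSeries (j + 1)
        ≤ ⁅H.lowerCentralSeries j ⊔ upperCentralSeries G (n + 1),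
            H ⊔ upperCentralSeries G (n + (j + 1))⁆ :=
          commutator_mono (ih (n + 1) (by rwa [Nat.add_right_comm])) hGH
      _ ≤ H.lowerCentralSeries (j + 1) ⊔ upperCentralSeries G n :=
          commutator_sup_sup_le (commutator_upperCentralSeries_top_le G n) hA

end Subgroup

theorem stmt_2_general {G : Type*} [Group G]
    (H : Subgroup G) (i : ℕ)
    (hGH : ∀ g : G, ∃ z ∈ Subgroup.upperCentralSeries G i, ∃ h ∈ H, g = z * h) :
    Subgroup.map H.subtype ((⊤ : Subgroup H).lowerCentralSeries i) = (⊤ : Subgroup G).lowerCentralSeries i := by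
  have hTop : ⊤ ≤ H ⊔ Subgroup.upperCentralSeries G (0 + i) := fun g _ => by
    obtain ⟨z, hz, h, hh, rfl⟩ := hGH g
    rw [zero_add, sup_comm]
    exact Subgroup.mul_mem_sup hz hh
  rw [Subgroup.top_subtype_lowerCentralSeries]
  refine le_antisymm (Subgroup.lowerCentralSeries_le_of_le le_top i) ?_
  simpa using Subgroup.lowerCentralSeries_le_sup_upperCentralSeries i 0 hTop

/-- If `G = Z_i(G)·H` then `γ_{i+1}(H) = γ_{i+1}(G)`.
Note `lowerCentralSeries G i` is `γ_{i+1}(G)` (indexing starts at `γ_1 = G` for index 0). -/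
theorem stmt_2 {G : Type*} [Group G] [Group.IsNilpotent G]
    (H : Subgroup G) (i : ℕ) (hi : 1 ≤ i)
    (hGH : ∀ g : G, ∃ z ∈ Subgroup.upperCentralSeries G i, ∃ h ∈ H, g = z * h) :
    Subgroup.map H.subtype ((⊤ : Subgroup H).lowerCentralSeries i) = (⊤ : Subgroup G).lowerCentralSeries i :=
  stmt_2_general H i hGH
end

section
/- Let G be a nilpotent group with G = Z_i(G)·H for a subgroup H. Then for all 1 ≤ j ≤ i, γ_j(G) ≤ Z_{i-j+1}(G)·γ_j(H). -/
/-!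
Induction on `j`. Write an element of `γ_j(G)` as `z k` with `z ∈ Z_{i-j+1}(G)`, `k ∈ γ_j(H)`,
and an element of `G` as `z' h` with `z' ∈ Z_i(G)`, `h ∈ H`. Modulo `N = Z_{i-j}(G)` the factor `z`
is central, and `z'` centralizes `γ_j(G)` because `⁅γ_j(G), Z_i(G)⁆ ≤ Z_{i-j}(G)` (three subgroups
lemma). Hence `⁅z k, z' h⁆ ≡ ⁅k, h⁆ mod N`, and `⁅k, h⁆ ∈ γ_{j+1}(H)`.
-/

open scoped commutatorElement

namespace Subgroup

variable {G : Type*} [Group G]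

theorem commutator_commutator_le_of_rotate_s3 {A B C N : Subgroup G} [N.Normal]
    (h1 : ⁅⁅B, C⁆, A⁆ ≤ N) (h2 : ⁅⁅C, A⁆, B⁆ ≤ N) : ⁅⁅A, B⁆, C⁆ ≤ N := by
  simp only [← QuotientGroup.ker_mk' N, ← map_eq_bot_iff, map_commutator] at h1 h2 ⊢
  exact commutator_commutator_eq_bot_of_rotate h1 h2

theorem commutator_upperCentralSeries_top_le_pred (n : ℕ) :
    ⁅upperCentralSeries G n, ⊤⁆ ≤ upperCentralSeries G (n - 1) := by
  cases n with
  | zero => simp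
  | succ n => exact commutator_upperCentralSeries_top_le G n

theorem commutator_lowerCentralSeries_upperCentralSeries_le (m n : ℕ) :
    ⁅(⊤ : Subgroup G).lowerCentralSeries m, upperCentralSeries G n⁆ ≤
      upperCentralSeries G (n - (m + 1)) := by
  induction m generalizing n with
  | zero =>
    rw [lowerCentralSeries_zero, commutator_comm]
    exact commutator_upperCentralSeries_top_le_pred n
  | succ m ih =>
    rw [lowerCentralSeries_succ]
    apply commutator_commutator_le_of_rotate_s3
    · calc ⁅⁅⊤, upperCentralSeries G n⁆, (⊤ : Subgroup G).lowerCentralSeries m⁆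
          ≤ ⁅upperCentralSeries G (n - 1), (⊤ : Subgroup G).lowerCentralSeries m⁆ :=
            commutator_mono ((commutator_comm _ _).le.trans
              (commutator_upperCentralSeries_top_le_pred n)) le_rfl
        _ ≤ upperCentralSeries G (n - 1 - (m + 1)) := (commutator_comm _ _).le.trans (ih _)
        _ = upperCentralSeries G (n - (m + 1 + 1)) := by rw [Nat.sub_sub, Nat.add_comm 1]
    · calc ⁅⁅upperCentralSeries G n, (⊤ : Subgroup G).lowerCentralSeries m⁆, ⊤⁆
          ≤ ⁅upperCentralSeries G (n - (m + 1)), ⊤⁆ :=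
            commutator_mono ((commutator_comm _ _).le.trans (ih n)) le_rfl
        _ ≤ upperCentralSeries G (n - (m + 1) - 1) := commutator_upperCentralSeries_top_le_pred _
        _ = upperCentralSeries G (n - (m + 1 + 1)) := by rw [Nat.sub_sub]

theorem commutator_mul_mem_upperCentralSeries_sup {H : Subgroup G} {i m : ℕ} {z k z' h : G}
    (hz : z ∈ upperCentralSeries G (i - m)) (hk : k ∈ H.lowerCentralSeries m)
    (hz' : z' ∈ upperCentralSeries G i) (hh : h ∈ H) :
    ⁅z * k, z' * h⁆ ∈ upperCentralSeries G (i - (m + 1)) ⊔ H.lowerCentralSeries (m + 1) := by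
  set N := upperCentralSeries G (i - (m + 1))
  have hk_top : k ∈ (⊤ : Subgroup G).lowerCentralSeries m := lowerCentralSeries_mono m le_top hk
  have hkh_top : ⁅k, h⁆ ∈ (⊤ : Subgroup G).lowerCentralSeries m :=
    lowerCentralSeries_antitone _ m.le_succ (commutator_mem_commutator hk_top (mem_top h))
  have central_z : ∀ g, ⁅z, g⁆ ∈ N := fun g ↦ by
    have := commutator_upperCentralSeries_top_le_pred _ (commutator_mem_commutator hz (mem_top g))
    rwa [Nat.sub_sub] at this
  have centralizes_lcs : ∀ x ∈ (⊤ : Subgroup G).lowerCentralSeries m, ⁅x, z'⁆ ∈ N := fun x hx ↦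
    commutator_lowerCentralSeries_upperCentralSeries_le m i (commutator_mem_commutator hx hz')
  have hkh : ⁅k, h⁆ ∈ H.lowerCentralSeries (m + 1) := commutator_mem_commutator hk hh
  have expand : ⁅z * k, z' * h⁆ =
      ⁅z, ⁅k, z' * h⁆⁆ * (⁅k, z'⁆ * ⁅⁅k, h⁆, z'⁆⁻¹ * ⁅k, h⁆) * ⁅z, z' * h⁆ := by
    simp only [commutatorElement_def]
    group
  rw [expand]
  exact mul_mem (mul_mem (mem_sup_left (central_z _)) (mul_mem (mul_mem
    (mem_sup_left (centralizes_lcs k hk_top)) (mem_sup_left (inv_mem (centralizes_lcs _ hkh_top))))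
    (mem_sup_right hkh))) (mem_sup_left (central_z _))

theorem lowerCentralSeries_le_upperCentralSeries_sup {H : Subgroup G} {i : ℕ}
    (hGH : upperCentralSeries G i ⊔ H = ⊤) (m : ℕ) :
    (⊤ : Subgroup G).lowerCentralSeries m ≤ upperCentralSeries G (i - m) ⊔ H.lowerCentralSeries m := by
  induction m with
  | zero => simpa using hGH.ge
  | succ m ih =>
    rw [lowerCentralSeries_succ, commutator_le]
    intro x hx g _
    obtain ⟨z, hz, k, hk, rfl⟩ := mem_sup_of_normal_left.mp (ih hx)
    obtain ⟨z', hz', h, hh, rfl⟩ := mem_sup_of_normal_left.mp (hGH ▸ mem_top g)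
    exact commutator_mul_mem_upperCentralSeries_sup hz hk hz' hh

end Subgroup

theorem stmt_3_general {G : Type*} [Group G]
    (H : Subgroup G) (i : ℕ)
    (hGH : ∀ g : G, ∃ z ∈ upperCentralSeries G i, ∃ h ∈ H, g = z * h) :
    ∀ j : ℕ, 1 ≤ j → j ≤ i →
      ∀ g ∈ (⊤ : Subgroup G).lowerCentralSeries (j - 1),
        ∃ z ∈ upperCentralSeries G (i - j + 1),
          ∃ h ∈ Subgroup.map H.subtype ((⊤ : Subgroup H).lowerCentralSeries (j - 1)), g = z * h := by
  have hsup : Subgroup.upperCentralSeries G i ⊔ H = ⊤ := by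
    refine eq_top_iff.mpr fun g _ ↦ ?_
    obtain ⟨z, hz, h, hh, rfl⟩ := hGH g
    exact Subgroup.mul_mem_sup hz hh
  intro j hj _ g hg
  obtain ⟨z, hz, k, hk, rfl⟩ := Subgroup.mem_sup_of_normal_left.mp
    (Subgroup.lowerCentralSeries_le_upperCentralSeries_sup hsup (j - 1) hg)
  refine ⟨z, ?_, k, ?_, rfl⟩
  · rwa [show i - j + 1 = i - (j - 1) by omega]
  · rwa [Subgroup.top_subtype_lowerCentralSeries]

/-- If `G = Z_i(G)·H` then for all `1 ≤ j ≤ i`, `γ_j(G) ≤ Z_{i-j+1}(G)·γ_j(H)`.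
Note `lowerCentralSeries G (j-1)` is `γ_j(G)`. -/
theorem stmt_3 {G : Type*} [Group G] [Group.IsNilpotent G]
    (H : Subgroup G) (i : ℕ)
    (hGH : ∀ g : G, ∃ z ∈ upperCentralSeries G i, ∃ h ∈ H, g = z * h) :
    ∀ j : ℕ, 1 ≤ j → j ≤ i →
      ∀ g ∈ (⊤ : Subgroup G).lowerCentralSeries (j - 1),
        ∃ z ∈ upperCentralSeries G (i - j + 1),
          ∃ h ∈ Subgroup.map H.subtype ((⊤ : Subgroup H).lowerCentralSeries (j - 1)), g = z * h :=
  stmt_3_general H i hGH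
end

section
/- Let G be a torsion-free nilpotent group, H a subgroup of finite index. Then H ∩ Z(G) = Z(H), where Z denotes the center. -/
/-!
In a torsion-free group, an element `g` of `Z_{k+1}` with `g ^ n ∈ Z_k` already lies in `Z_k`:
each commutator `c = ⁅g, x⁆` is central modulo `Z_{k-1}`, so `c ^ n ≡ ⁅g ^ n, x⁆ ∈ Z_{k-1}`, and
induction on `k` applies to `c`. Descending the upper central series of a nilpotent group, `g ^ n`
central forces `g` central; inside the centralizer of `a ^ n` this says that `a` commutes with
everything `a ^ n` commutes with. Since every `x ∈ G` has a positive power in `H`, an element of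
`Z(H)` commutes with all of `G`.
-/

open Subgroup commutatorElement

theorem commutatorElement_pow_left_of_commute_s6 {G : Type*} [Group G] {g x : G}
    (h : Commute g ⁅g, x⁆) (n : ℕ) : ⁅g ^ n, x⁆ = ⁅g, x⁆ ^ n := by
  induction n with
  | zero => simp
  | succ n ih =>
    calc ⁅g ^ (n + 1), x⁆ = g * ⁅g ^ n, x⁆ * g⁻¹ * ⁅g, x⁆ := by
          simp only [commutatorElement_def]; group
      _ = ⁅g, x⁆ ^ (n + 1) := by
          rw [ih, (h.pow_right n).eq, mul_inv_cancel_right, pow_succ]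

namespace Subgroup

theorem pow_commutatorElement_mem_iff {G : Type*} [Group G] {N : Subgroup G} [N.Normal]
    {g x : G} (h : ⁅g, x⁆ ∈ N.upperCentralSeriesStep) (n : ℕ) :
    ⁅g, x⁆ ^ n ∈ N ↔ ⁅g ^ n, x⁆ ∈ N := by
  rw [upperCentralSeriesStep_eq_comap_center, mem_comap, map_commutatorElement] at h
  have hcomm : Commute _ _ := mem_center_iff.mp h (QuotientGroup.mk' N g)
  rw [← QuotientGroup.ker_mk' N, MonoidHom.mem_ker, MonoidHom.mem_ker, map_pow,
    map_commutatorElement, map_commutatorElement, map_pow,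
    commutatorElement_pow_left_of_commute_s6 hcomm]

theorem mem_upperCentralSeries_of_pow_mem {G : Type*} [Group G]
    (htf : ∀ g : G, g ≠ 1 → ¬IsOfFinOrder g) {n : ℕ} (hn : n ≠ 0) :
    ∀ {k : ℕ} {g : G}, g ∈ upperCentralSeries G (k + 1) → g ^ n ∈ upperCentralSeries G k →
      g ∈ upperCentralSeries G k
  | 0, g, _, hgn => by
    rw [upperCentralSeries_zero, mem_bot] at hgn ⊢
    by_contra hg
    exact htf g hg (isOfFinOrder_iff_pow_eq_one.mpr ⟨n, Nat.pos_of_ne_zero hn, hgn⟩)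
  | k + 1, _, hg, hgn => fun x =>
    mem_upperCentralSeries_of_pow_mem htf hn (hg x)
      ((pow_commutatorElement_mem_iff (N := upperCentralSeries G k) (hg x) n).mpr (hgn x))

theorem mem_center_of_pow_mem_center {G : Type*} [Group G] [Group.IsNilpotent G]
    (htf : ∀ g : G, g ≠ 1 → ¬IsOfFinOrder g) {n : ℕ} (hn : n ≠ 0) {g : G}
    (hg : g ^ n ∈ center G) : g ∈ center G := by
  rw [← upperCentralSeries_one] at hg ⊢
  have descend : ∀ k, g ∈ upperCentralSeries G (k + 1) → g ∈ upperCentralSeries G 1 := by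
    intro k
    induction k with
    | zero => exact id
    | succ k ih => exact fun hk => ih (mem_upperCentralSeries_of_pow_mem htf hn hk
        (upperCentralSeries_mono G (by omega) hg))
  obtain ⟨c, hc⟩ := Group.IsNilpotent.nilpotent G
  exact descend c (upperCentralSeries_mono G c.le_succ (hc ▸ mem_top g))

end Subgroup

theorem commute_of_commute_pow_left {G : Type*} [Group G] [Group.IsNilpotent G]
    (htf : ∀ g : G, g ≠ 1 → ¬IsOfFinOrder g) {n : ℕ} (hn : n ≠ 0) {a b : G}
    (h : Commute (a ^ n) b) : Commute a b := by
  set C := centralizer {a ^ n}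
  have haC : a ∈ C := mem_centralizer_singleton_iff.mpr (Commute.self_pow a n).eq
  have hbC : b ∈ C := mem_centralizer_singleton_iff.mpr h.eq.symm
  have htfC : ∀ g : C, g ≠ 1 → ¬IsOfFinOrder g := fun g hg hfin =>
    htf g (by exact_mod_cast hg) (Submonoid.isOfFinOrder_coe.mpr hfin)
  have hcen : (⟨a, haC⟩ : C) ^ n ∈ center C :=
    mem_center_iff.mpr fun w => Subtype.ext (mem_centralizer_singleton_iff.mp w.2)
  exact (congrArg Subtype.val
    (mem_center_iff.mp (mem_center_of_pow_mem_center htfC hn hcen) ⟨b, hbC⟩)).symm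

theorem stmt_6 {G : Type*} [Group G] [Group.IsNilpotent G]
    (htf : ∀ g : G, g ≠ 1 → ¬IsOfFinOrder g)
    (H : Subgroup G) (hH : H.FiniteIndex) :
    H ⊓ Subgroup.center G = Subgroup.map H.subtype (Subgroup.center H) := by
  ext g
  constructor
  · rintro ⟨hgH, hgZ⟩
    exact ⟨⟨g, hgH⟩, mem_center_iff.mpr fun w => Subtype.ext (mem_center_iff.mp hgZ w), rfl⟩
  · rintro ⟨w, hw, rfl⟩
    refine ⟨w.2, mem_center_iff.mpr fun x => ?_⟩
    obtain ⟨m, hm, -, hxm⟩ := exists_pow_mem_of_index_ne_zero hH.index_ne_zero x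
    exact (commute_of_commute_pow_left htf hm.ne'
      (congrArg Subtype.val (mem_center_iff.mp hw ⟨x ^ m, hxm⟩))).eq
end

section
/- Let G be a torsion-free nilpotent group, H ≤ G of finite index, and f : H → G a homomorphism with trivial f-core(H) (no nontrivial subgroup K of H that is normal in G and satisfies f(K) ≤ K). Then f is injective. -/
/-!
A torsion-free nilpotent group has unique roots: modulo the centre this holds by induction on
the nilpotency class (the quotient by a torsion-free centre again has torsion-free centre), and
two roots of the same element that agree modulo the centre differ by a central element of
finite order. Hence an element commuting with some power of `g` commutes with `g`, and since
every element of `G` has a power in `H`, the centre of `H` is central in `G`. Now if `ker f`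
were nontrivial it would, being normal in the nilpotent group `H`, meet `Z(H)` nontrivially;
but `ker f ⊓ Z(H)` is central, hence normal, in `G` and is mapped to `1` by `f`, so it is
trivial by the hypothesis on the `f`-core.
-/

open Subgroup

namespace Group

variable {G : Type*} [Group G]

theorem mem_center_of_pow_mem_center (hZ : ∀ z ∈ center G, z ≠ 1 → ¬IsOfFinOrder z) {y : G}
    (hy : (y : G ⧸ center G) ∈ center (G ⧸ center G)) {n : ℕ} (hn : n ≠ 0)
    (hyn : y ^ n ∈ center G) : y ∈ center G := by
  refine mem_center_iff.mpr fun g => ?_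
  set c := y⁻¹ * (g * y * g⁻¹)
  have hc : c ∈ center G := by
    refine QuotientGroup.eq.mp ?_
    rw [QuotientGroup.mk_mul, QuotientGroup.mk_mul, QuotientGroup.mk_inv, mem_center_iff.mp hy g,
      mul_inv_cancel_right]
  have hconj : g * y * g⁻¹ = y * c := by simp [c]
  -- `g` fixes `y ^ n` and moves `y` by the central factor `c`, so `c ^ n = 1`.
  have hcn : c ^ n = 1 := by
    have h := (conj_pow (a := g) (b := y) (i := n)).symm
    rw [mem_center_iff.mp hyn g, mul_inv_cancel_right, hconj,
      Commute.mul_pow (mem_center_iff.mp hc y)] at h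
    simpa using h
  have hc1 : c = 1 := by
    by_contra hc1
    exact hZ c hc hc1 (isOfFinOrder_iff_pow_eq_one.mpr ⟨n, Nat.pos_of_ne_zero hn, hcn⟩)
  rw [hc1, mul_one] at hconj
  exact mul_inv_eq_iff_eq_mul.mp hconj

theorem not_isOfFinOrder_of_mem_center_quotient_center
    (hZ : ∀ z ∈ center G, z ≠ 1 → ¬IsOfFinOrder z) :
    ∀ q ∈ center (G ⧸ center G), q ≠ 1 → ¬IsOfFinOrder q := by
  rintro q hq hq1 hfin
  obtain ⟨n, hn, hqn⟩ := isOfFinOrder_iff_pow_eq_one.mp hfin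
  obtain ⟨y, rfl⟩ := QuotientGroup.mk_surjective q
  have hyn : y ^ n ∈ center G := by
    rwa [← QuotientGroup.eq_one_iff, QuotientGroup.mk_pow]
  exact hq1 ((QuotientGroup.eq_one_iff y).mpr (mem_center_of_pow_mem_center hZ hq hn.ne' hyn))

theorem isMulTorsionFree_of_center_torsionFree [IsNilpotent G]
    (hZ : ∀ z ∈ center G, z ≠ 1 → ¬IsOfFinOrder z) : IsMulTorsionFree G := by
  revert hZ
  refine nilpotent_center_quotient_ind
    (P := fun G _ _ => (∀ z ∈ center G, z ≠ 1 → ¬IsOfFinOrder z) → IsMulTorsionFree G) G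
    (fun G _ _ _ => ⟨fun _ _ x y _ => Subsingleton.elim x y⟩) ?_
  intro G _ _ ih hZ
  have := ih (not_isOfFinOrder_of_mem_center_quotient_center hZ)
  refine ⟨fun n hn x y (hxy : x ^ n = y ^ n) => ?_⟩
  have hz : x⁻¹ * y ∈ center G := QuotientGroup.eq.mp <|
    pow_left_injective hn (by simp only [← QuotientGroup.mk_pow, hxy])
  have hzn : (x⁻¹ * y) ^ n = 1 := by
    have : y ^ n = x ^ n * (x⁻¹ * y) ^ n := by
      rw [← Commute.mul_pow (mem_center_iff.mp hz x), mul_inv_cancel_left]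
    rwa [← hxy, left_eq_mul] at this
  by_contra hne
  exact hZ _ hz (fun h => hne (inv_mul_eq_one.mp h))
    (isOfFinOrder_iff_pow_eq_one.mpr ⟨n, Nat.pos_of_ne_zero hn, hzn⟩)

theorem commute_of_commute_pow [IsMulTorsionFree G] {a b : G} {n : ℕ} (hn : n ≠ 0)
    (h : Commute a (b ^ n)) : Commute a b := by
  have : (a * b * a⁻¹) ^ n = b ^ n := by rw [conj_pow, h.eq, mul_inv_cancel_right]
  exact mul_inv_eq_iff_eq_mul.mp (pow_left_injective hn this)

end Group

namespace Subgroup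

variable {G : Type*} [Group G]

theorem map_subtype_center_le_center [IsMulTorsionFree G] (H : Subgroup G) [H.FiniteIndex] :
    (center H).map H.subtype ≤ center G := by
  rintro _ ⟨x, hx, rfl⟩
  refine mem_center_iff.mpr fun g => ?_
  obtain ⟨n, hn, -, hgn⟩ := exists_pow_mem_of_index_ne_zero (FiniteIndex.index_ne_zero (H := H)) g
  have : Commute (x : G) (g ^ n) :=
    (congrArg Subtype.val (mem_center_iff.mp hx ⟨g ^ n, hgn⟩)).symm
  exact (Group.commute_of_commute_pow hn.ne' this).symm.eq

theorem normal_of_le_center {K : Subgroup G} (hK : K ≤ center G) : K.Normal :=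
  ⟨fun k hk g => by rwa [mem_center_iff.mp (hK hk) g, mul_inv_cancel_right]⟩

theorem eq_bot_of_inf_center_eq_bot [Group.IsNilpotent G] {N : Subgroup G} [N.Normal]
    (h : N ⊓ center G = ⊥) : N = ⊥ := by
  have key : ∀ i, N ⊓ upperCentralSeries G i = ⊥ := by
    intro i
    induction i with
    | zero => rw [upperCentralSeries_zero, inf_bot_eq]
    | succ i ih =>
      refine eq_bot_iff.mpr (le_trans (le_inf inf_le_left ?_) h.le)
      rw [← commutator_top_right_eq_bot_iff_le_center, ← le_bot_iff, ← ih]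
      exact le_inf ((commutator_le_left _ _).trans inf_le_left)
        ((commutator_mono inf_le_right le_rfl).trans (commutator_upperCentralSeries_top_le G i))
  simpa [upperCentralSeries_nilpotencyClass] using key (Group.nilpotencyClass G)

end Subgroup

theorem stmt_9 {G : Type*} [Group G] [Group.IsNilpotent G]
    (htf : ∀ g : G, g ≠ 1 → ¬IsOfFinOrder g)
    (H : Subgroup G) (hH : H.FiniteIndex) (f : H →* G)
    (hsimple : ∀ K : Subgroup G, (hKH : K ≤ H) → K.Normal →
      (∀ x : G, (hx : x ∈ K) → f ⟨x, hKH hx⟩ ∈ K) → K = ⊥) :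
    Function.Injective f := by
  have : IsMulTorsionFree G := Group.isMulTorsionFree_of_center_torsionFree fun z _ => htf z
  set K := (f.ker ⊓ center H).map H.subtype
  have hKH : K ≤ H := map_subtype_le _
  have hKcenter : K ≤ center G := (map_mono inf_le_right).trans H.map_subtype_center_le_center
  have hfK : ∀ x : G, (hx : x ∈ K) → f ⟨x, hKH hx⟩ ∈ K := by
    rintro _ ⟨x, hx, rfl⟩
    have hfx : f x = 1 := hx.1
    simp [hfx]
  have hK : K = ⊥ := hsimple K hKH (normal_of_le_center hKcenter) hfK
  rw [← MonoidHom.ker_eq_bot_iff]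
  exact eq_bot_of_inf_center_eq_bot <| (map_eq_bot_iff_of_injective _ H.subtype_injective).mp hK
end

section
/- Let G be a nilpotent group, H ≤ G of finite index m, f : H → G a homomorphism, and L = f-core(H) the maximal subgroup of H normal in G with f(L) ≤ L. Then ker(f) ≤ √[H]{L} = {h ∈ H : h^n ∈ L for some n ≥ 1}. -/
/-!
Put `M := f⁻¹(L) ≤ H`. As `L ⊴ G`, `H` normalizes `M`; the normal core of `M` is normal in `G`,
lies in `H` and is mapped by `f` into `L ≤ core M`, so by maximality it lies in `L`. Since
`ker f ≤ M`, it remains to see that in a nilpotent group every `x ∈ M` has a power in the normal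
core of `M` as soon as the normalizer of `M` has finite index; finitely many cosets reduce this
to one conjugator `y`, with `z := yᵏ` normalizing `M`.

In the nilpotent group `⟨x, y⟩` there is a uniform `K` such that every `K`-th power lies in
`⟨x, z⟩ ≤ P := M⟨z⟩` (induction along the lower central series, commutators being bilinear
modulo the next term). `P / M` is cyclic, generated by `z`. If it is finite, a further power of
`y xᴷ y⁻¹` lies in `M`. Otherwise `P / M ≅ ℤ` via the exponent `ε` of `z`, and
`ε (y d y⁻¹) = ε d` for the relevant `d` by descending induction along the lower central series:
on each layer `i ↦ ε (yⁱ d y⁻ⁱ)` is an arithmetic progression which is `k`-periodic, hence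
constant.
-/

open Subgroup
open scoped commutatorElement

section LowerCentralSeries

variable {G : Type*} [Group G]

local notation "γ" => Subgroup.lowerCentralSeries (⊤ : Subgroup G)

theorem conj_mem_lowerCentralSeries {n : ℕ} {d : G} (hd : d ∈ γ n) (g : G) :
    g * d * g⁻¹ ∈ γ n :=
  (lowerCentralSeries_normal ⊤ n).conj_mem d hd g

theorem commutatorElement_mem_lowerCentralSeries_succ {n : ℕ} {a : G} (ha : a ∈ γ n) (b : G) :
    ⁅a, b⁆ ∈ γ (n + 1) :=
  commutator_mem_commutator ha (mem_top b)

theorem commutatorElement_mem_lowerCentralSeries_succ' {n : ℕ} {b : G} (hb : b ∈ γ n) (a : G) :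
    ⁅a, b⁆ ∈ γ (n + 1) := by
  simpa only [commutatorElement_inv] using
    inv_mem (commutatorElement_mem_lowerCentralSeries_succ hb a)

theorem exists_mul_pow_eq_pow_mul_pow_mul (a : G) {n : ℕ} {b : G} (hb : b ∈ γ n) (N : ℕ) :
    ∃ d ∈ γ (n + 1), (a * b) ^ N = a ^ N * b ^ N * d := by
  induction N with
  | zero => exact ⟨1, one_mem _, by simp⟩
  | succ N ih =>
    obtain ⟨d, hd, hN⟩ := ih
    refine ⟨b⁻¹ * (⁅(b ^ N)⁻¹, a⁻¹⁆ * (a⁻¹ * d * a)) * b, ?_, ?_⟩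
    · simpa using conj_mem_lowerCentralSeries (mul_mem
        (commutatorElement_mem_lowerCentralSeries_succ (inv_mem (pow_mem hb N)) a⁻¹)
        (by simpa using conj_mem_lowerCentralSeries hd a⁻¹)) b⁻¹
    · rw [pow_succ, hN, commutatorElement_def]
      group

theorem exists_commutatorElement_pow_left_eq {n : ℕ} {a : G} (ha : a ∈ γ n) (s : G) (e : ℕ) :
    ∃ d ∈ γ (n + 2), ⁅a ^ e, s⁆ = ⁅a, s⁆ ^ e * d := by
  induction e with
  | zero => exact ⟨1, one_mem _, by simp⟩
  | succ e ih =>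
    obtain ⟨d, hd, he⟩ := ih
    have hw : (⁅a, s⁆ ^ e)⁻¹ ∈ γ (n + 1) :=
      inv_mem (pow_mem (commutatorElement_mem_lowerCentralSeries_succ ha s) e)
    refine ⟨⁅a, s⁆⁻¹ * (⁅(⁅a, s⁆ ^ e)⁻¹, a⁆ * (a * d * a⁻¹)) * ⁅a, s⁆, ?_, ?_⟩
    · simpa using conj_mem_lowerCentralSeries (mul_mem
        (commutatorElement_mem_lowerCentralSeries_succ hw a) (conj_mem_lowerCentralSeries hd a))
        ⁅a, s⁆⁻¹
    · rw [pow_succ', commutatorElement_mul_left_eq_conj_mul, he,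
        commutatorElement_def (⁅a, s⁆ ^ e)⁻¹ a]
      generalize ⁅a, s⁆ = w
      group

theorem exists_commutatorElement_pow_right_eq {n : ℕ} {a : G} (ha : a ∈ γ n) (s : G) (e : ℕ) :
    ∃ d ∈ γ (n + 2), ⁅a, s ^ e⁆ = ⁅a, s⁆ ^ e * d := by
  induction e with
  | zero => exact ⟨1, one_mem _, by simp⟩
  | succ e ih =>
    obtain ⟨d, hd, he⟩ := ih
    have hw : (⁅a, s⁆ ^ e)⁻¹ ∈ γ (n + 1) :=
      inv_mem (pow_mem (commutatorElement_mem_lowerCentralSeries_succ ha s) e)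
    refine ⟨⁅(⁅a, s⁆ ^ e)⁻¹, s⁆ * (s * d * s⁻¹), ?_, ?_⟩
    · exact mul_mem (commutatorElement_mem_lowerCentralSeries_succ hw s)
        (conj_mem_lowerCentralSeries hd s)
    · rw [pow_succ', commutatorElement_mul_right_eq_mul_conj, he,
        commutatorElement_def (⁅a, s⁆ ^ e)⁻¹ s]
      generalize ⁅a, s⁆ = w
      group

def lowerCentralPowPreimage (V : Subgroup G) (n N : ℕ) : Subgroup G where
  carrier := {c | c ∈ γ n ∧ c ^ N ∈ V ⊔ γ (n + 1)}
  one_mem' := ⟨one_mem _, by simp [one_mem]⟩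
  mul_mem' := by
    rintro a b ⟨ha, haN⟩ ⟨hb, hbN⟩
    obtain ⟨d, hd, hab⟩ := exists_mul_pow_eq_pow_mul_pow_mul a hb N
    exact ⟨mul_mem ha hb, hab ▸ mul_mem (mul_mem haN hbN) (mem_sup_right hd)⟩
  inv_mem' := by
    rintro a ⟨ha, haN⟩
    exact ⟨inv_mem ha, by simpa only [inv_pow] using inv_mem haN⟩

theorem lowerCentralSeries_succ_le_lowerCentralPowPreimage (V : Subgroup G) (n N : ℕ) :
    γ (n + 1) ≤ lowerCentralPowPreimage V n N := fun _ hc =>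
  ⟨Subgroup.lowerCentralSeries_antitone ⊤ n.le_succ hc, mem_sup_right (pow_mem hc N)⟩

instance lowerCentralPowPreimage_normal (V : Subgroup G) (n N : ℕ) :
    (lowerCentralPowPreimage V n N).Normal where
  conj_mem c hc g := by
    have he : ⁅c⁻¹, g⁆ ∈ lowerCentralPowPreimage V n N :=
      lowerCentralSeries_succ_le_lowerCentralPowPreimage V n N
        (commutatorElement_mem_lowerCentralSeries_succ (inv_mem hc.1) g)
    simpa [commutatorElement_def, mul_assoc] using mul_mem hc he

theorem commutatorElement_mem_lowerCentralPowPreimage {T : Subgroup G} {n E k : ℕ} {a s : G}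
    (ha : a ∈ γ n) (haE : a ^ E ∈ T ⊔ γ (n + 1)) (hs : s ^ k ∈ T) :
    ⁅a, s⁆ ∈ lowerCentralPowPreimage T (n + 1) (E * k) := by
  refine ⟨commutatorElement_mem_lowerCentralSeries_succ ha s, ?_⟩
  obtain ⟨t, ht, h, hh, hth⟩ := mem_sup_of_normal_right.mp haE
  have hcomm : ⁅a ^ E, s ^ k⁆ ∈ T ⊔ γ (n + 2) := by
    rw [← hth, commutatorElement_mul_left_eq_conj_mul]
    exact mul_mem (mem_sup_right (conj_mem_lowerCentralSeries
      (commutatorElement_mem_lowerCentralSeries_succ hh _) t))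
      (mem_sup_left (T.commutator_le_self (commutator_mem_commutator ht hs)))
  have hEs : ⁅a ^ E, s⁆ ∈ lowerCentralPowPreimage T (n + 1) k := by
    obtain ⟨d, hd, hk⟩ := exists_commutatorElement_pow_right_eq (pow_mem ha E) s k
    refine ⟨commutatorElement_mem_lowerCentralSeries_succ (pow_mem ha E) s, ?_⟩
    rw [show ⁅a ^ E, s⁆ ^ k = ⁅a ^ E, s ^ k⁆ * d⁻¹ by rw [hk]; group]
    exact mul_mem hcomm (mem_sup_right (inv_mem hd))
  obtain ⟨d, hd, hE⟩ := exists_commutatorElement_pow_left_eq ha s E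
  have : ⁅a, s⁆ ^ E ∈ lowerCentralPowPreimage T (n + 1) k := by
    rw [show ⁅a, s⁆ ^ E = ⁅a ^ E, s⁆ * d⁻¹ by rw [hE]; group]
    exact mul_mem hEs (lowerCentralSeries_succ_le_lowerCentralPowPreimage _ _ _ (inv_mem hd))
  simpa only [pow_mul] using this.2

variable {X : Set G} {T : Subgroup G} {k : ℕ}

theorem exists_lowerCentralSeries_le_lowerCentralPowPreimage (hX : closure X = ⊤) (hk : 0 < k)
    (hXT : ∀ s ∈ X, s ^ k ∈ T) (n : ℕ) :
    ∃ E, 0 < E ∧ γ n ≤ lowerCentralPowPreimage T n E := by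
  induction n with
  | zero =>
    refine ⟨k, hk, ?_⟩
    rw [Subgroup.lowerCentralSeries_zero, ← hX, closure_le]
    exact fun s hs => ⟨mem_top s, mem_sup_left (hXT s hs)⟩
  | succ n ih =>
    obtain ⟨E, hE, hγ⟩ := ih
    refine ⟨E * k, Nat.mul_pos hE hk, ?_⟩
    rw [Subgroup.lowerCentralSeries_succ, commutator_le]
    rintro a ha s -
    have hs : s ∈ closure X := hX ▸ mem_top s
    induction hs using closure_induction with
    | mem s hs => exact commutatorElement_mem_lowerCentralPowPreimage ha (hγ ha).2 (hXT s hs)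
    | one => simp [one_mem]
    | mul s₁ s₂ _ _ h₁ h₂ =>
      rw [commutatorElement_mul_right_eq_mul_conj]
      simpa only [mul_assoc] using
        mul_mem h₁ ((lowerCentralPowPreimage_normal _ _ _).conj_mem _ h₂ s₁)
    | inv s _ h =>
      rw [commutatorElement_inv_right, ← commutatorElement_inv]
      simpa using (lowerCentralPowPreimage_normal _ _ _).conj_mem _ (inv_mem h) s⁻¹

theorem exists_pow_mem_sup_lowerCentralSeries (hX : closure X = ⊤) (hk : 0 < k)
    (hXT : ∀ s ∈ X, s ^ k ∈ T) (n : ℕ) : ∃ K, 0 < K ∧ ∀ g : G, g ^ K ∈ T ⊔ γ n := by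
  induction n with
  | zero => exact ⟨1, one_pos, fun g => by simp⟩
  | succ n ih =>
    obtain ⟨K, hK, hKT⟩ := ih
    obtain ⟨E, hE, hγ⟩ := exists_lowerCentralSeries_le_lowerCentralPowPreimage hX hk hXT n
    refine ⟨K * E, Nat.mul_pos hK hE, fun g => ?_⟩
    obtain ⟨t, ht, h, hh, hth⟩ := mem_sup_of_normal_right.mp (hKT g)
    obtain ⟨d, hd, htE⟩ := exists_mul_pow_eq_pow_mul_pow_mul t hh E
    rw [pow_mul, ← hth, htE]
    exact mul_mem (mul_mem (mem_sup_left (pow_mem ht E)) (hγ hh).2) (mem_sup_right hd)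

theorem exists_pow_mem_of_closure_eq_top [Group.IsNilpotent G] (hX : closure X = ⊤) (hk : 0 < k)
    (hXT : ∀ s ∈ X, s ^ k ∈ T) : ∃ K, 0 < K ∧ ∀ g : G, g ^ K ∈ T := by
  obtain ⟨c, hc⟩ := Subgroup.nilpotent_iff_lowerCentralSeries.mp ‹_›
  obtain ⟨K, hK, hKT⟩ := exists_pow_mem_sup_lowerCentralSeries hX hk hXT c
  exact ⟨K, hK, fun g => by simpa [hc] using hKT g⟩

end LowerCentralSeries

theorem exists_pow_mem_of_mem_closure {G : Type*} [Group G] [Group.IsNilpotent G] {X : Set G}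
    {T : Subgroup G} {k : ℕ} (hk : 0 < k) (hXT : ∀ s ∈ X, s ^ k ∈ T) :
    ∃ K, 0 < K ∧ ∀ g ∈ closure X, g ^ K ∈ T := by
  obtain ⟨K, hK, hKT⟩ := exists_pow_mem_of_closure_eq_top (T := T.subgroupOf (closure X))
    closure_closure_coe_preimage hk fun s hs => by simpa [mem_subgroupOf] using hXT s hs
  exact ⟨K, hK, fun g hg => by simpa [mem_subgroupOf] using hKT ⟨g, hg⟩⟩

section CyclicExtension

variable {G : Type*} [Group G] {M : Subgroup G} {z : G}

theorem mem_sup_zpowers_iff (hz : z ∈ normalizer (M : Set G)) {p : G} :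
    p ∈ M ⊔ zpowers z ↔ ∃ s : ℤ, p * z ^ (-s) ∈ M := by
  constructor
  · intro hp
    rw [← SetLike.mem_coe, coe_mul_of_right_le_normalizer_left M _ (zpowers_le.mpr hz)] at hp
    obtain ⟨m, hm, _, ⟨s, rfl⟩, rfl⟩ := hp
    exact ⟨s, by simpa using hm⟩
  · rintro ⟨s, hs⟩
    simpa using mul_mem (mem_sup_left hs) (mem_sup_right (zpow_mem (mem_zpowers z) s))

theorem zpow_conj_mem (hz : z ∈ normalizer (M : Set G)) (s : ℤ) {m : G} (hm : m ∈ M) :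
    z ^ s * m * (z ^ s)⁻¹ ∈ M :=
  (mem_normalizer_iff.mp (zpow_mem hz s) m).mp hm

theorem pow_mem_of_mem_sup_zpowers (hz : z ∈ normalizer (M : Set G)) {n : ℕ} (hzn : z ^ n ∈ M)
    {p : G} (hp : p ∈ M ⊔ zpowers z) : p ^ n ∈ M := by
  obtain ⟨s, hs⟩ := (mem_sup_zpowers_iff hz).mp hp
  have hpow : ∀ j : ℕ, p ^ j * z ^ (-(s * j)) ∈ M := by
    intro j
    induction j with
    | zero => simp
    | succ j ih =>
      have := mul_mem ih (zpow_conj_mem hz (s * j) hs)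
      rwa [show p ^ j * z ^ (-(s * j)) * (z ^ (s * j) * (p * z ^ (-s)) * (z ^ (s * j))⁻¹) =
        p ^ (j + 1) * z ^ (-(s * ↑(j + 1))) by push_cast; rw [mul_add, mul_one]; group] at this
  have hzsn : z ^ (s * n) ∈ M := by
    rw [mul_comm, zpow_mul, zpow_natCast]; exact zpow_mem hzn s
  simpa using mul_mem (hpow n) hzsn

open Classical in
/-- The exponent `s` with `g ∈ M * z ^ s`. When no nonzero power of `z` lies in `M` it is unique
and realizes `(M ⊔ zpowers z) / M ≅ ℤ`; outside `M ⊔ zpowers z` it is the junk value `0`. -/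
noncomputable def zpowIndex (M : Subgroup G) (z g : G) : ℤ :=
  if h : ∃ s : ℤ, g * z ^ (-s) ∈ M then h.choose else 0

variable (hfree : ∀ s : ℤ, z ^ s ∈ M → s = 0)
include hfree

theorem zpowIndex_eq {g : G} {s : ℤ} (hs : g * z ^ (-s) ∈ M) : zpowIndex M z g = s := by
  have h : ∃ s : ℤ, g * z ^ (-s) ∈ M := ⟨s, hs⟩
  rw [zpowIndex, dif_pos h]
  have := mul_mem (inv_mem h.choose_spec) hs
  rw [show (g * z ^ (-h.choose))⁻¹ * (g * z ^ (-s)) = z ^ (h.choose - s) by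
    rw [sub_eq_add_neg, zpow_add]; group] at this
  linarith [hfree _ this]

theorem zpowIndex_mul (hz : z ∈ normalizer (M : Set G)) {p q : G} (hp : p ∈ M ⊔ zpowers z)
    (hq : q ∈ M ⊔ zpowers z) : zpowIndex M z (p * q) = zpowIndex M z p + zpowIndex M z q := by
  obtain ⟨s, hs⟩ := (mem_sup_zpowers_iff hz).mp hp
  obtain ⟨t, ht⟩ := (mem_sup_zpowers_iff hz).mp hq
  rw [zpowIndex_eq hfree hs, zpowIndex_eq hfree ht]
  apply zpowIndex_eq hfree
  have := mul_mem hs (zpow_conj_mem hz s ht)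
  rwa [show p * z ^ (-s) * (z ^ s * (q * z ^ (-t)) * (z ^ s)⁻¹) = p * q * z ^ (-(s + t)) by
    rw [neg_add, zpow_add]; group] at this

theorem zpowIndex_conj (hz : z ∈ normalizer (M : Set G)) {p : G} (hp : p ∈ M ⊔ zpowers z) :
    zpowIndex M z (z * p * z⁻¹) = zpowIndex M z p := by
  obtain ⟨s, hs⟩ := (mem_sup_zpowers_iff hz).mp hp
  rw [zpowIndex_eq hfree hs]
  apply zpowIndex_eq hfree
  have := zpow_conj_mem hz 1 hs
  rwa [show z ^ (1 : ℤ) * (p * z ^ (-s)) * (z ^ (1 : ℤ))⁻¹ = z * p * z⁻¹ * z ^ (-s) by group]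
    at this

theorem zpowIndex_eq_zero_iff (hz : z ∈ normalizer (M : Set G)) {p : G} (hp : p ∈ M ⊔ zpowers z) :
    zpowIndex M z p = 0 ↔ p ∈ M := by
  obtain ⟨s, hs⟩ := (mem_sup_zpowers_iff hz).mp hp
  refine ⟨fun h => ?_, fun h => zpowIndex_eq hfree (by simpa using h)⟩
  rw [zpowIndex_eq hfree hs] at h
  simpa [h] using hs

end CyclicExtension

section Nilpotent

variable {G : Type*} [Group G] [Group.IsNilpotent G]

local notation "γ" => Subgroup.lowerCentralSeries (⊤ : Subgroup G)

theorem zpowIndex_conj_eq {M : Subgroup G} {y : G} {k : ℕ} (hk : 0 < k)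
    (hy : y ^ k ∈ normalizer (M : Set G)) (hfree : ∀ s : ℤ, (y ^ k) ^ s ∈ M → s = 0)
    {R : Subgroup G} (hRP : R ≤ M ⊔ zpowers (y ^ k)) (hRy : ∀ d ∈ R, y * d * y⁻¹ ∈ R)
    {d : G} (hd : d ∈ R) : zpowIndex M (y ^ k) (y * d * y⁻¹) = zpowIndex M (y ^ k) d := by
  set ε := zpowIndex M (y ^ k)
  have hmul : ∀ p ∈ R, ∀ q ∈ R, ε (p * q) = ε p + ε q := fun p hp q hq =>
    zpowIndex_mul hfree hy (hRP hp) (hRP hq)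
  have hRconj : ∀ d ∈ R, ∀ i : ℕ, y ^ i * d * (y ^ i)⁻¹ ∈ R := by
    intro d hd i
    induction i with
    | zero => simpa using hd
    | succ i ih => simpa [pow_succ', mul_assoc] using hRy _ ih
  -- On `R ∩ γ n`, once `ε` is `y`-invariant on `R ∩ γ (n + 1)`, `i ↦ ε (yⁱ d y⁻ⁱ)` is arithmetic
  -- with difference `ε ⁅y, d⁆`, and `k`-periodic since `yᵏ` acts trivially on `P / M`.
  have key : ∀ m n, γ (n + m) = ⊥ → ∀ d ∈ R, d ∈ γ n →
      ∀ i : ℕ, ε (y ^ i * d * (y ^ i)⁻¹) = ε d := by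
    intro m
    induction m with
    | zero =>
      intro n hn d _ hdn i
      rw [add_zero] at hn
      rw [hn, mem_bot] at hdn
      simp [hdn]
    | succ m ih =>
      intro n hn d hdR hdn
      have heR : ⁅y, d⁆ ∈ R := by
        rw [commutatorElement_def]; exact mul_mem (hRy d hdR) (inv_mem hdR)
      have he := ih (n + 1) (by rwa [add_right_comm, add_assoc]) _ heR
        (commutatorElement_mem_lowerCentralSeries_succ' hdn y)
      have hlin : ∀ i : ℕ, ε (y ^ i * d * (y ^ i)⁻¹) = ε d + i * ε ⁅y, d⁆ := by
        intro i
        induction i with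
        | zero => simp
        | succ i ihi =>
          rw [show y ^ (i + 1) * d * (y ^ (i + 1))⁻¹ =
              y ^ i * ⁅y, d⁆ * (y ^ i)⁻¹ * (y ^ i * d * (y ^ i)⁻¹) by
                rw [commutatorElement_def, pow_succ']; group,
            hmul _ (hRconj _ heR i) _ (hRconj _ hdR i), he, ihi]
          push_cast; ring
      have hkd : ε (y ^ k * d * (y ^ k)⁻¹) = ε d := zpowIndex_conj hfree hy (hRP hdR)
      have : ε ⁅y, d⁆ = 0 := by
        rw [hlin k, add_eq_left, mul_eq_zero] at hkd
        exact hkd.resolve_left (by exact_mod_cast hk.ne')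
      intro i
      rw [hlin i, this, mul_zero, add_zero]
  obtain ⟨c, hc⟩ := Subgroup.nilpotent_iff_lowerCentralSeries.mp ‹_›
  simpa using key c 0 (by rwa [zero_add]) d hd (mem_top d) 1

theorem exists_pow_conj_mem_of_pow_mem_normalizer {M : Subgroup G} {x y : G} {k : ℕ}
    (hk : 0 < k) (hy : y ^ k ∈ normalizer (M : Set G)) (hx : x ∈ M) :
    ∃ n, 0 < n ∧ y * x ^ n * y⁻¹ ∈ M := by
  set P := M ⊔ zpowers (y ^ k)
  obtain ⟨K, hK, hKP⟩ := exists_pow_mem_of_mem_closure (X := {x, y}) (T := P) hk <| by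
    rintro s (rfl | rfl)
    exacts [mem_sup_left (pow_mem hx k), mem_sup_right (mem_zpowers _)]
  have hconjP : ∀ i : ℕ, y ^ i * x ^ K * (y ^ i)⁻¹ ∈ P := fun i => by
    have hyS : y ∈ closure {x, y} := subset_closure (by simp)
    rw [← conj_pow]
    exact hKP _ (mul_mem (mul_mem (pow_mem hyS i) (subset_closure (by simp)))
      (inv_mem (pow_mem hyS i)))
  by_cases hfree : ∀ s : ℤ, (y ^ k) ^ s ∈ M → s = 0
  · let R : Subgroup G := ⨅ i : ℕ, P.comap (MulAut.conj (y ^ i)).toMonoidHom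
    have hR : ∀ d, d ∈ R ↔ ∀ i : ℕ, y ^ i * d * (y ^ i)⁻¹ ∈ P := by
      simp only [R, mem_iInf, mem_comap, MulEquiv.coe_toMonoidHom, MulAut.conj_apply,
        implies_true]
    have hxR : x ^ K ∈ R := (hR _).mpr hconjP
    have hRP : R ≤ P := fun d hd => by simpa using (hR d).mp hd 0
    have hRy : ∀ d ∈ R, y * d * y⁻¹ ∈ R := fun d hd => (hR _).mpr fun i => by
      simpa [pow_succ, mul_assoc] using (hR d).mp hd (i + 1)
    refine ⟨K, hK, (zpowIndex_eq_zero_iff hfree hy (hRP (hRy _ hxR))).mp ?_⟩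
    rw [zpowIndex_conj_eq hk hy hfree hRP hRy hxR]
    exact (zpowIndex_eq_zero_iff hfree hy (hRP hxR)).mpr (pow_mem hx K)
  · push Not at hfree
    obtain ⟨s, hs, hs0⟩ := hfree
    obtain ⟨n, hn, hzn⟩ : ∃ n : ℕ, 0 < n ∧ (y ^ k) ^ n ∈ M := by
      obtain ⟨n, rfl | rfl⟩ := Int.eq_nat_or_neg s
      · exact ⟨n, by omega, by simpa using hs⟩
      · exact ⟨n, by omega, by simpa using hs⟩
    refine ⟨K * n, Nat.mul_pos hK hn, ?_⟩
    rw [pow_mul, ← conj_pow]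
    exact pow_mem_of_mem_sup_zpowers hy hzn (by simpa using hconjP 1)

theorem exists_pow_mem_normalCore {M : Subgroup G} [(normalizer (M : Set G)).FiniteIndex]
    {x : G} (hx : x ∈ M) : ∃ n, 0 < n ∧ x ^ n ∈ M.normalCore := by
  set N := normalizer (M : Set G)
  have : Finite (G ⧸ N) := finite_quotient_of_finiteIndex
  have := Fintype.ofFinite (G ⧸ N)
  have hconj : ∀ g : G, ∃ n, 0 < n ∧ g * x ^ n * g⁻¹ ∈ M := fun g => by
    obtain ⟨k, hk, -, hgk⟩ :=
      exists_pow_mem_of_index_ne_zero (FiniteIndex.index_ne_zero (H := N)) g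
    exact exists_pow_conj_mem_of_pow_mem_normalizer hk hgk hx
  -- `g * x ^ n * g⁻¹ ∈ M` only depends on the coset `g⁻¹ N`: pick one exponent per coset
  choose n hn hnM using fun q : G ⧸ N => hconj (q.out)⁻¹
  refine ⟨∏ q, n q, Finset.prod_pos fun q _ => hn q, fun g => ?_⟩
  obtain ⟨η, hη⟩ := QuotientGroup.mk_out_eq_mul N g⁻¹
  set q : G ⧸ N := ↑g⁻¹
  have hg : g * x ^ n q * g⁻¹ ∈ M := by
    have := (mem_normalizer_iff.mp η.2 _).mp (hnM q)
    rwa [hη, show η * ((g⁻¹ * η)⁻¹ * x ^ n q * (g⁻¹ * η)⁻¹⁻¹) * (η : G)⁻¹ =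
      g * x ^ n q * g⁻¹ by group] at this
  obtain ⟨j, hj⟩ := Finset.dvd_prod_of_mem n (Finset.mem_univ q)
  rw [hj, pow_mul, ← conj_pow]
  exact pow_mem hg j

end Nilpotent

theorem stmt_10 {G : Type*} [Group G] [Group.IsNilpotent G]
    (H : Subgroup G) (m : ℕ) (hm : H.index = m) (hmpos : 0 < m)
    (f : H →* G)
    (L : Subgroup G) (hLH : L ≤ H) (hLnormal : L.Normal)
    (hLinv : ∀ x : G, (hx : x ∈ L) → f ⟨x, hLH hx⟩ ∈ L)
    (hLmax : ∀ K : Subgroup G, (hKH : K ≤ H) → K.Normal →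
      (∀ x : G, (hx : x ∈ K) → f ⟨x, hKH hx⟩ ∈ K) → K ≤ L) :
    ∀ h : H, h ∈ f.ker → ∃ n : ℕ, 1 ≤ n ∧ (h : G) ^ n ∈ L := by
  intro h hker
  set M := (L.comap f).map H.subtype
  have hMH : M ≤ H := map_subtype_le _
  have hmemM : ∀ u (hu : u ∈ M), f ⟨u, hMH hu⟩ ∈ L := by
    rintro _ ⟨w, hw, rfl⟩
    exact hw
  have hLM : L ≤ M := fun u hu => ⟨⟨u, hLH hu⟩, hLinv u hu, rfl⟩
  have hHM : H ≤ normalizer (M : Set G) := by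
    refine (normal_subgroupOf_iff_le_normalizer hMH).mp ?_
    rw [subgroupOf, comap_map_eq_self_of_injective H.subtype_injective]
    exact hLnormal.comap f
  have : H.FiniteIndex := ⟨by omega⟩
  have : (normalizer (M : Set G)).FiniteIndex := finiteIndex_of_le hHM
  have hcore : M.normalCore ≤ L := hLmax _ (M.normalCore_le.trans hMH) inferInstance
    fun u hu => normal_le_normalCore.mpr hLM (hmemM u (M.normalCore_le hu))
  have hhM : (h : G) ∈ M := ⟨h, by simp [f.mem_ker.mp hker, one_mem], rfl⟩
  obtain ⟨n, hn, hnM⟩ := exists_pow_mem_normalCore hhM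
  exact ⟨n, hn, hcore hnM⟩
end

section
/- Let G be a 2-generated torsion-free nilpotent group of class c. Then the derived subgroup equals the (c−1)-st upper central subgroup: G' = Z_{c−1}(G). -/
/-- The old Mathlib definition (removed since): a monoid is torsion-free if no element
other than `1` has finite order. -/
def Monoid.IsTorsionFree (G : Type*) [Monoid G] : Prop :=
  ∀ g : G, g ≠ 1 → ¬IsOfFinOrder g

/-!
The inclusion `G' ≤ Z_{c-1}` holds in every nilpotent group of class `c`. For the converse, write
`c = d + 2` (for `c ≤ 1` the right-hand side is trivial) and let `Q = G ⧸ Z_d`. Since the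
upper central quotients of a torsion-free nilpotent group are torsion-free, `Q` is a torsion-free
group of class `2` generated by the images of `a` and `b`. Modulo `G'`, an element `x ∈ Z_{d+1}` is
`a^m b^n`, so `a^m b^n` is central in `Q`. If `m ≠ 0` then `a^m` commutes with `b` in `Q`, and as
`[a, b]` is central there, `[a, b]^m = [a^m, b] = 1`; torsion-freeness gives `[a, b] = 1`, so `Q` is
abelian and `G` has class at most `d + 1`, a contradiction. Hence `m = n = 0` and `x ∈ G'`.
-/

open scoped commutatorElement

section

variable {G : Type*} [Group G]

theorem commutatorElement_pow_left {a b : G} (h : Commute a ⁅a, b⁆) :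
    ∀ k : ℕ, ⁅a ^ k, b⁆ = ⁅a, b⁆ ^ k
  | 0 => by simp
  | k + 1 => by
    calc ⁅a ^ (k + 1), b⁆ = a * ⁅a ^ k, b⁆ * a⁻¹ * ⁅a, b⁆ := by
          simp only [commutatorElement_def, pow_succ']; group
      _ = ⁅a, b⁆ ^ (k + 1) := by
          rw [commutatorElement_pow_left h k, (h.pow_right k).eq, mul_inv_cancel_right, pow_succ]

theorem commutatorElement_zpow_left {a b : G} (h : Commute a ⁅a, b⁆) :
    ∀ m : ℤ, ⁅a ^ m, b⁆ = ⁅a, b⁆ ^ m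
  | (k : ℕ) => by simpa using commutatorElement_pow_left h k
  | .negSucc k => by
    have hk : Commute (a ^ (k + 1)) ⁅a ^ (k + 1), b⁆ := by
      rw [commutatorElement_pow_left h]
      exact h.pow_pow _ _
    rw [zpow_negSucc, zpow_negSucc, commutatorElement_inv_left, ← commutatorElement_inv,
      hk.inv_right.inv_mul_cancel, commutatorElement_pow_left h]

theorem exists_zpow_mul_zpow_inv_mul_mem_commutator {a b : G}
    (hgen : Subgroup.closure {a, b} = ⊤) (x : G) :
    ∃ m n : ℤ, (a ^ m * b ^ n)⁻¹ * x ∈ commutator G := by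
  have hx : Abelianization.of x ∈ Subgroup.closure {Abelianization.of a, Abelianization.of b} := by
    rw [← Set.image_pair, ← MonoidHom.map_closure, hgen]
    exact ⟨x, trivial, rfl⟩
  obtain ⟨m, n, hmn⟩ := Subgroup.mem_closure_pair.mp hx
  refine ⟨m, n, ?_⟩
  rw [← Abelianization.ker_of, MonoidHom.mem_ker, map_mul, map_inv, map_mul, map_zpow, map_zpow,
    hmn, inv_mul_cancel]

namespace Monoid.IsTorsionFree

theorem commute_of_zpow_commute (htf : Monoid.IsTorsionFree G) {a b : G}
    (hab : Commute a ⁅a, b⁆) {m : ℤ} (hm : m ≠ 0) (h : Commute (a ^ m) b) : Commute a b := by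
  rw [← commutatorElement_eq_one_iff_commute] at h ⊢
  by_contra hne
  refine htf _ hne (isOfFinOrder_iff_zpow_eq_one.mpr ⟨m, hm, ?_⟩)
  rwa [← commutatorElement_zpow_left hab]

theorem commute_of_zpow_mul_zpow_mem_center (htf : Monoid.IsTorsionFree G) {a b : G}
    (hab : ⁅a, b⁆ ∈ Subgroup.center G) {m n : ℤ} (h : a ^ m * b ^ n ∈ Subgroup.center G)
    (hmn : m ≠ 0 ∨ n ≠ 0) : Commute a b := by
  rcases hmn with hm | hn
  · have hb : Commute (a ^ m * b ^ n) b := (Subgroup.mem_center_iff.mp h b).symm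
    refine htf.commute_of_zpow_commute (Subgroup.mem_center_iff.mp hab a) hm ?_
    simpa using hb.mul_left ((Commute.refl b).zpow_left n).inv_left
  · have ha : Commute a (a ^ m * b ^ n) := Subgroup.mem_center_iff.mp h a
    have hba : ⁅b, a⁆ ∈ Subgroup.center G := commutatorElement_inv a b ▸ inv_mem hab
    refine (htf.commute_of_zpow_commute (Subgroup.mem_center_iff.mp hba b) hn ?_).symm
    simpa using (((Commute.refl a).zpow_right m).inv_right.mul_right ha).symm

end Monoid.IsTorsionFree

namespace Subgroup

theorem center_eq_top_of_closure_pair_eq_top {a b : G} (hab : Commute a b)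
    (hgen : closure {a, b} = ⊤) : center G = ⊤ := by
  have hcomm := isMulCommutative_closure (k := {a, b})
    (by rintro _ (rfl | rfl) _ (rfl | rfl) <;> simp [hab.eq])
  rw [← le_centralizer_iff_isMulCommutative, hgen, coe_top, centralizer_univ] at hcomm
  exact top_le_iff.mp hcomm

theorem upperCentralSeries_succ_eq_comap_center (k : ℕ) :
    upperCentralSeries G (k + 1) =
      (center (G ⧸ upperCentralSeries G k)).comap (QuotientGroup.mk' (upperCentralSeries G k)) :=
  upperCentralSeriesStep_eq_comap_center (upperCentralSeries G k)

theorem upperCentralSeries_succ_eq_top_iff {k : ℕ} :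
    upperCentralSeries G (k + 1) = ⊤ ↔ _root_.commutator G ≤ upperCentralSeries G k := by
  simp only [eq_top_iff', mem_upperCentralSeries_succ_iff, _root_.commutator_def, commutator_le,
    mem_top, forall_const]

theorem commutator_le_upperCentralSeries_nilpotencyClass_sub_one [Group.IsNilpotent G] :
    _root_.commutator G ≤ upperCentralSeries G (Group.nilpotencyClass G - 1) :=
  upperCentralSeries_succ_eq_top_iff.mp <| upperCentralSeries_eq_top_iff_nilpotencyClass_le.mpr
    (by omega)

theorem mem_upperCentralSeries_of_pow_mem_of_mem_succ (htf : Monoid.IsTorsionFree G) {n : ℕ}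
    (hn : n ≠ 0) :
    ∀ {k : ℕ} {g : G}, g ∈ upperCentralSeries G (k + 1) → g ^ n ∈ upperCentralSeries G k →
      g ∈ upperCentralSeries G k
  | 0, g, _, hgn => by
    rw [upperCentralSeries_zero, mem_bot] at hgn ⊢
    by_contra hg
    exact htf g hg (isOfFinOrder_iff_pow_eq_one.mpr ⟨n, Nat.pos_of_ne_zero hn, hgn⟩)
  | k + 1, g, hg, hgn => by
    rw [mem_upperCentralSeries_succ_iff] at hg hgn ⊢
    intro y
    refine mem_upperCentralSeries_of_pow_mem_of_mem_succ htf hn (hg y) ?_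
    -- modulo `Z_k` the commutator `⁅g, y⁆` is central, so its `n`-th power is `⁅g ^ n, y⁆`
    have hcentral : QuotientGroup.mk' _ ⁅g, y⁆ ∈ center (G ⧸ upperCentralSeries G k) := by
      simpa only [upperCentralSeries_succ_eq_comap_center k, mem_comap] using hg y
    rw [← QuotientGroup.eq_one_iff, ← (QuotientGroup.eq_one_iff _).mpr (hgn y)]
    simp only [← QuotientGroup.mk'_apply, map_commutatorElement, map_pow] at hcentral ⊢
    exact (commutatorElement_pow_left (mem_center_iff.mp hcentral _) n).symm

theorem mem_upperCentralSeries_of_pow_mem_s14 [Group.IsNilpotent G] (htf : Monoid.IsTorsionFree G)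
    {n : ℕ} (hn : n ≠ 0) {k : ℕ} {g : G} (hgn : g ^ n ∈ upperCentralSeries G k) :
    g ∈ upperCentralSeries G k := by
  suffices descend : ∀ i, g ∈ upperCentralSeries G (k + i) → g ∈ upperCentralSeries G k by
    refine descend (Group.nilpotencyClass G) (upperCentralSeries_mono G (Nat.le_add_left _ k) ?_)
    simp
  intro i
  induction i with
  | zero => exact id
  | succ i ih =>
    exact fun hg ↦ ih <| mem_upperCentralSeries_of_pow_mem_of_mem_succ htf hn hg
      (upperCentralSeries_mono G (Nat.le_add_right k i) hgn)

theorem isTorsionFree_quotient_upperCentralSeries [Group.IsNilpotent G]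
    (htf : Monoid.IsTorsionFree G) (k : ℕ) :
    Monoid.IsTorsionFree (G ⧸ upperCentralSeries G k) := by
  intro q hq hfin
  induction q using QuotientGroup.induction_on with
  | H g =>
    obtain ⟨n, hn, hgn⟩ := isOfFinOrder_iff_pow_eq_one.mp hfin
    rw [← QuotientGroup.mk_pow, QuotientGroup.eq_one_iff] at hgn
    exact hq ((QuotientGroup.eq_one_iff g).mpr (mem_upperCentralSeries_of_pow_mem_s14 htf hn.ne' hgn))

theorem upperCentralSeries_succ_eq_top_of_zpow_mul_zpow_mem [Group.IsNilpotent G]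
    (htf : Monoid.IsTorsionFree G) {a b : G} (hgen : closure {a, b} = ⊤) {k : ℕ}
    (hle : _root_.commutator G ≤ upperCentralSeries G (k + 1)) {m n : ℤ}
    (h : a ^ m * b ^ n ∈ upperCentralSeries G (k + 1)) (hmn : m ≠ 0 ∨ n ≠ 0) :
    upperCentralSeries G (k + 1) = ⊤ := by
  set π := QuotientGroup.mk' (upperCentralSeries G k)
  rw [upperCentralSeries_succ_eq_comap_center] at hle h ⊢
  have hab : ⁅π a, π b⁆ ∈ center (G ⧸ upperCentralSeries G k) := by
    rw [← map_commutatorElement]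
    exact hle (commutator_mem_commutator (mem_top a) (mem_top b))
  have hcomm : Commute (π a) (π b) :=
    (isTorsionFree_quotient_upperCentralSeries htf k).commute_of_zpow_mul_zpow_mem_center hab
      (by simpa only [mem_comap, map_mul, map_zpow] using h) hmn
  have hgen' : closure {π a, π b} = ⊤ := by
    rw [← Set.image_pair, ← MonoidHom.map_closure, hgen, ← MonoidHom.range_eq_map,
      MonoidHom.range_eq_top_of_surjective _ (QuotientGroup.mk'_surjective _)]
  rw [center_eq_top_of_closure_pair_eq_top hcomm hgen', comap_top]

end Subgroup

end

theorem stmt_14 {G : Type*} [Group G] [Group.IsNilpotent G]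
    (htf : Monoid.IsTorsionFree G)
    (a b : G) (hgen : Subgroup.closure {a, b} = ⊤)
    (c : ℕ) (hc : Group.nilpotencyClass G = c) :
    commutator G = upperCentralSeries G (c - 1) := by
  show commutator G = Subgroup.upperCentralSeries G (c - 1)
  subst hc
  have hle := Subgroup.commutator_le_upperCentralSeries_nilpotencyClass_sub_one (G := G)
  refine le_antisymm hle ?_
  rcases Nat.lt_or_ge (Group.nilpotencyClass G) 2 with hlt | hge
  · rw [show Group.nilpotencyClass G - 1 = 0 by omega, Subgroup.upperCentralSeries_zero]
    exact bot_le
  obtain ⟨d, hd⟩ := Nat.exists_eq_add_of_le' hge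
  rw [hd, show d + 2 - 1 = d + 1 from rfl] at hle ⊢
  intro x hx
  obtain ⟨m, n, hmn⟩ := exists_zpow_mul_zpow_inv_mul_mem_commutator hgen x
  by_cases h0 : m = 0 ∧ n = 0
  · simpa [h0] using hmn
  have hmem : a ^ m * b ^ n ∈ Subgroup.upperCentralSeries G (d + 1) := by
    simpa using inv_mem (mul_mem (hle hmn) (inv_mem hx))
  have htop := Subgroup.upperCentralSeries_succ_eq_top_of_zpow_mul_zpow_mem htf hgen hle hmem
    (not_and_or.mp h0)
  have := Subgroup.upperCentralSeries_eq_top_iff_nilpotencyClass_le.mp htop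
  omega
end

section
/- Let G be a 2-generated torsion-free nilpotent group and H a proper normal subgroup of finite index in G that is isomorphic to G. Then G is abelian. -/
/-!
Let `γ` be the lower central series, indexed so that `γ 1 = [G, G]`. Modulo `γ 2`, the group
`γ 1` is cyclic, generated by `⁅a, b⁆`. If this generator has finite order `k`, then every
factor `γ n / γ (n + 1)` with `n ≥ 1` has exponent dividing `k`, so `γ 1` is a torsion group,
hence trivial.

Otherwise commutators give an alternating bilinear form `κ : G / γ 1 × G / γ 1 → ℤ` with
`κ a b = 1`, so `G / γ 1 ≅ ℤ²`. An endomorphism `ψ` of `G` with image `H` scales `κ` by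
`M = κ (ψ a) (ψ b)`, the determinant of `ψ` on `G / γ 1`; `M ≠ 0` as `H` has finite index.
Normality of `H` makes every entry of that `2 × 2` matrix divisible by `M`, so `M ∣ 1`. Then `ψ`
is onto modulo `[G, G]`, and in a nilpotent group this forces `H = G`.
-/

open Subgroup QuotientGroup
open scoped commutatorElement

section

variable {G : Type*} [Group G]

-- Mathlib's indexing: `γ 0 = G`, `γ 1 = [G, G]`, `γ 2 = [[G, G], G]`.
local notation "γ" => Subgroup.lowerCentralSeries (⊤ : Subgroup G)
local notation "π" => QuotientGroup.mk' (Subgroup.lowerCentralSeries (⊤ : Subgroup G) 2)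

theorem commutatorElement_mem_lowerCentralSeries_succ_s15 {n : ℕ} {x : G} (hx : x ∈ γ n) (y : G) :
    ⁅x, y⁆ ∈ γ (n + 1) :=
  commutator_mem_commutator hx (mem_top y)

theorem commutatorElement_mem_lowerCentralSeries_one (x y : G) : ⁅x, y⁆ ∈ γ 1 :=
  commutatorElement_mem_lowerCentralSeries_succ_s15 (mem_top x) y

theorem commute_mk_of_mem_lowerCentralSeries {n : ℕ} {x : G} (hx : x ∈ γ n) (y : G) :
    Commute (mk' (γ (n + 1)) x) (mk' (γ (n + 1)) y) := by
  rw [← commutatorElement_eq_one_iff_commute, ← map_commutatorElement, mk'_apply, eq_one_iff]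
  exact commutatorElement_mem_lowerCentralSeries_succ_s15 hx y

theorem mk_conj_of_mem_lowerCentralSeries {n : ℕ} {x : G} (hx : x ∈ γ n) (y : G) :
    mk' (γ (n + 1)) (y * x * y⁻¹) = mk' (γ (n + 1)) x := by
  rw [map_mul, map_mul, map_inv]
  exact (commute_mk_of_mem_lowerCentralSeries hx y).symm.mul_inv_cancel

theorem mk_commutatorElement_pow {n : ℕ} {p : G} (hp : p ∈ γ n) (q : G) (m : ℕ) :
    mk' (γ (n + 2)) (⁅p, q⁆ ^ m) = mk' (γ (n + 2)) ⁅p ^ m, q⁆ := by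
  induction m with
  | zero => simp
  | succ m ih =>
    have hconj := mk_conj_of_mem_lowerCentralSeries
      (commutatorElement_mem_lowerCentralSeries_succ_s15 (pow_mem hp m) q) p
    rw [pow_succ' p, show ⁅p * p ^ m, q⁆ = p * ⁅p ^ m, q⁆ * p⁻¹ * ⁅p, q⁆ by group, map_mul,
      hconj, ← ih, pow_succ, map_mul]

theorem pow_mem_lowerCentralSeries_succ_of_pow_mem {k : ℕ}
    (h : ∀ g ∈ γ 1, g ^ k ∈ γ 2) (n : ℕ) : ∀ g ∈ γ (n + 1), g ^ k ∈ γ (n + 2) := by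
  induction n with
  | zero => exact h
  | succ n ih =>
    intro g hg
    induction hg using closure_induction with
    | mem x hx =>
      obtain ⟨p, hp, q, -, rfl⟩ := hx
      rw [← eq_one_iff, ← mk'_apply, mk_commutatorElement_pow hp, mk'_apply, eq_one_iff]
      exact commutatorElement_mem_lowerCentralSeries_succ_s15 (ih p hp) q
    | one => simp
    | mul x y hx _ ihx ihy =>
      rw [← eq_one_iff, ← mk'_apply, map_pow, map_mul,
        (commute_mk_of_mem_lowerCentralSeries hx y).mul_pow, ← map_pow, ← map_pow, mk'_apply,
        mk'_apply, (eq_one_iff _).mpr ihx, (eq_one_iff _).mpr ihy, one_mul]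
    | inv x _ ihx => rw [inv_pow]; exact inv_mem ihx

theorem pow_pow_mem_lowerCentralSeries {k : ℕ} (h : ∀ g ∈ γ 1, g ^ k ∈ γ 2) (n : ℕ) :
    ∀ g ∈ γ 1, g ^ k ^ n ∈ γ (n + 1) := by
  induction n with
  | zero => simp
  | succ n ih =>
    intro g hg
    rw [pow_succ, pow_mul]
    exact pow_mem_lowerCentralSeries_succ_of_pow_mem h n _ (ih g hg)

theorem lowerCentralSeries_one_eq_bot_of_pow_mem [Group.IsNilpotent G]
    (htf : ∀ g : G, g ≠ 1 → ¬IsOfFinOrder g) {k : ℕ} (hk : 0 < k)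
    (h : ∀ g ∈ γ 1, g ^ k ∈ γ 2) : γ 1 = ⊥ := by
  obtain ⟨n, hn⟩ := Subgroup.nilpotent_iff_lowerCentralSeries.mp ‹Group.IsNilpotent G›
  refine (eq_bot_iff_forall _).mpr fun g hg => not_not.mp fun hne => htf g hne ?_
  refine isOfFinOrder_iff_pow_eq_one.mpr ⟨k ^ n, pow_pos hk n, ?_⟩
  have hle : γ (n + 1) ≤ γ n := Subgroup.lowerCentralSeries_antitone _ n.le_succ
  simpa [hn] using hle (pow_pow_mem_lowerCentralSeries h n g hg)

theorem Subgroup.eq_top_of_sup_commutator_eq_top [Group.IsNilpotent G] {H : Subgroup G}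
    [H.Normal] (h : H ⊔ _root_.commutator G = ⊤) : H = ⊤ := by
  have : Group.IsPerfect (G ⧸ H) := by
    refine ⟨eq_top_iff.mpr ?_⟩
    rw [← map_top_of_surjective _ (mk'_surjective H), ← h, map_sup, map_mk'_self, bot_sup_eq,
      _root_.commutator_def, _root_.commutator_def, map_commutator]
    exact commutator_mono le_top le_top
  by_contra hH
  have : Nontrivial (G ⧸ H) := QuotientGroup.nontrivial_iff.mpr hH
  exact Group.IsPerfect.not_isNilpotent (G ⧸ H) inferInstance

theorem map_mem_lowerCentralSeries {G' : Type*} [Group G'] (f : G →* G') {n : ℕ} {x : G}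
    (hx : x ∈ γ n) : f x ∈ (⊤ : Subgroup G').lowerCentralSeries n := by
  have hfx := mem_map_of_mem f hx
  rw [map_lowerCentralSeries] at hfx
  exact lowerCentralSeries_mono n le_top hfx

section TwoGenerated

variable {a b : G}

theorem mk_commutatorElement_mem_zpowers (hgen : closure {a, b} = ⊤) (x y : G) :
    π ⁅x, y⁆ ∈ zpowers (π ⁅a, b⁆) := by
  have hmem : ∀ z : G, z ∈ closure ({a, b} : Set G) := fun z => hgen ▸ mem_top z
  have hconj : ∀ {u v : G} (w : G), π (w * ⁅u, v⁆ * w⁻¹) = π ⁅u, v⁆ := fun w =>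
    mk_conj_of_mem_lowerCentralSeries (commutatorElement_mem_lowerCentralSeries_one _ _) w
  induction hmem x, hmem y using closure_induction₂ with
  | mem u v hu hv =>
    simp only [Set.mem_insert_iff, Set.mem_singleton_iff] at hu hv
    rcases hu with hu | hu <;> rcases hv with hv | hv <;> rw [hu, hv]
    · rw [commutatorElement_self, map_one]
      exact one_mem _
    · exact mem_zpowers _
    · rw [← commutatorElement_inv a b, map_inv]
      exact inv_mem (mem_zpowers _)
    · rw [commutatorElement_self, map_one]
      exact one_mem _
  | one_left =>
    rw [commutatorElement_one_left, map_one]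
    exact one_mem _
  | one_right =>
    rw [commutatorElement_one_right, map_one]
    exact one_mem _
  | mul_left x y z _ _ _ hx hy =>
    rw [show ⁅x * y, z⁆ = x * ⁅y, z⁆ * x⁻¹ * ⁅x, z⁆ by group, map_mul, hconj]
    exact mul_mem hy hx
  | mul_right y z x _ _ _ hy hz =>
    rw [show ⁅x, y * z⁆ = ⁅x, y⁆ * (y * ⁅x, z⁆ * y⁻¹) by group, map_mul, hconj]
    exact mul_mem hy hz
  | inv_left x y _ _ h =>
    rw [show ⁅x⁻¹, y⁆ = x⁻¹ * ⁅y, x⁆ * x⁻¹⁻¹ by group, hconj, ← commutatorElement_inv x y, map_inv]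
    exact inv_mem h
  | inv_right x y _ _ h =>
    rw [show ⁅x, y⁻¹⁆ = y⁻¹ * ⁅y, x⁆ * y⁻¹⁻¹ by group, hconj, ← commutatorElement_inv x y, map_inv]
    exact inv_mem h

theorem mk_mem_zpowers_of_mem_lowerCentralSeries_one (hgen : closure {a, b} = ⊤) {v : G}
    (hv : v ∈ γ 1) : π v ∈ zpowers (π ⁅a, b⁆) := by
  have hle : γ 1 ≤ (zpowers (π ⁅a, b⁆)).comap π := by
    rw [Subgroup.lowerCentralSeries_succ, Subgroup.lowerCentralSeries_zero, commutator_le]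
    exact fun x _ y _ => mk_commutatorElement_mem_zpowers hgen x y
  exact hle hv

theorem lowerCentralSeries_one_eq_bot_of_isOfFinOrder [Group.IsNilpotent G]
    (htf : ∀ g : G, g ≠ 1 → ¬IsOfFinOrder g) (hgen : closure {a, b} = ⊤)
    (hc : IsOfFinOrder (π ⁅a, b⁆)) : γ 1 = ⊥ := by
  refine lowerCentralSeries_one_eq_bot_of_pow_mem htf hc.orderOf_pos fun g hg => ?_
  obtain ⟨j, hj⟩ := mem_zpowers_iff.mp (mk_mem_zpowers_of_mem_lowerCentralSeries_one hgen hg)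
  rw [← eq_one_iff, ← mk'_apply, map_pow, ← hj, ← zpow_natCast, ← zpow_mul, mul_comm, zpow_mul,
    zpow_natCast, pow_orderOf_eq_one, one_zpow]

theorem exists_eq_zpow_mul_zpow_mul (hgen : closure {a, b} = ⊤) (z : G) :
    ∃ α β : ℤ, ∃ w ∈ γ 1, z = a ^ α * b ^ β * w := by
  have hz : Abelianization.of z ∈ closure {Abelianization.of a, Abelianization.of b} := by
    rw [← Set.image_pair, ← MonoidHom.map_closure, hgen]
    exact mem_map_of_mem _ (mem_top z)
  obtain ⟨α, β, hab⟩ := mem_closure_pair.mp hz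
  refine ⟨α, β, (a ^ α * b ^ β)⁻¹ * z, ?_, by group⟩
  rw [top_lowerCentralSeries_one, ← Abelianization.ker_of, MonoidHom.mem_ker, map_mul, map_inv,
    map_mul, map_zpow, map_zpow, hab, inv_mul_cancel]

end TwoGenerated

structure IsInfiniteCyclicGenerator (c : G) : Prop where
  not_isOfFinOrder : ¬IsOfFinOrder (π c)
  mem_zpowers : ∀ v ∈ γ 1, π v ∈ zpowers (π c)

/-- `⁅x, y⁆ ≡ c ^ commExponent c x y` modulo `γ 2`, when `c` is an infinite cyclic generator. -/
noncomputable def commExponent (c x y : G) : ℤ :=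
  Function.invFun (fun j : ℤ => π c ^ j) (π ⁅x, y⁆)

namespace IsInfiniteCyclicGenerator

variable {c : G}

theorem commExponent_eq (hc : IsInfiniteCyclicGenerator c) {x y : G} {j : ℤ}
    (h : π ⁅x, y⁆ = π c ^ j) : commExponent c x y = j := by
  rw [commExponent, h]
  exact Function.leftInverse_invFun (injective_zpow_iff_not_isOfFinOrder.mpr hc.not_isOfFinOrder) j

theorem mk_commutatorElement (hc : IsInfiniteCyclicGenerator c) (x y : G) :
    π ⁅x, y⁆ = π c ^ commExponent c x y :=
  (Function.invFun_eq (mem_zpowers_iff.mp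
    (hc.mem_zpowers _ (commutatorElement_mem_lowerCentralSeries_one x y)))).symm

theorem commExponent_mul_left (hc : IsInfiniteCyclicGenerator c) (x y z : G) :
    commExponent c (x * y) z = commExponent c x z + commExponent c y z := by
  refine hc.commExponent_eq ?_
  rw [show ⁅x * y, z⁆ = x * ⁅y, z⁆ * x⁻¹ * ⁅x, z⁆ by group, map_mul,
    mk_conj_of_mem_lowerCentralSeries (commutatorElement_mem_lowerCentralSeries_one y z),
    hc.mk_commutatorElement, hc.mk_commutatorElement, ← zpow_add, add_comm]

theorem commExponent_mul_right (hc : IsInfiniteCyclicGenerator c) (x y z : G) :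
    commExponent c x (y * z) = commExponent c x y + commExponent c x z := by
  refine hc.commExponent_eq ?_
  rw [show ⁅x, y * z⁆ = ⁅x, y⁆ * (y * ⁅x, z⁆ * y⁻¹) by group, map_mul,
    mk_conj_of_mem_lowerCentralSeries (commutatorElement_mem_lowerCentralSeries_one x z),
    hc.mk_commutatorElement, hc.mk_commutatorElement, ← zpow_add]

theorem commExponent_swap (hc : IsInfiniteCyclicGenerator c) (x y : G) :
    commExponent c y x = -commExponent c x y :=
  hc.commExponent_eq <| by
    rw [← commutatorElement_inv, map_inv, hc.mk_commutatorElement, zpow_neg]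

theorem commExponent_self (hc : IsInfiniteCyclicGenerator c) (x : G) :
    commExponent c x x = 0 :=
  hc.commExponent_eq <| by rw [commutatorElement_self, map_one, zpow_zero]

theorem commExponent_eq_zero_of_mem_left (hc : IsInfiniteCyclicGenerator c) {x : G}
    (hx : x ∈ γ 1) (y : G) : commExponent c x y = 0 :=
  hc.commExponent_eq <| by
    rw [zpow_zero, mk'_apply, eq_one_iff]
    exact commutatorElement_mem_lowerCentralSeries_succ_s15 hx y

theorem commExponent_eq_zero_of_mem_right (hc : IsInfiniteCyclicGenerator c) (x : G) {y : G}
    (hy : y ∈ γ 1) : commExponent c x y = 0 := by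
  rw [hc.commExponent_swap, hc.commExponent_eq_zero_of_mem_left hy, neg_zero]

theorem commExponent_zpow_left (hc : IsInfiniteCyclicGenerator c) (x y : G) (n : ℤ) :
    commExponent c (x ^ n) y = n * commExponent c x y := by
  simpa using map_zsmul (AddMonoidHom.mk' (fun x : Additive G => commExponent c x.toMul y)
    fun x x' => hc.commExponent_mul_left _ _ _) n (Additive.ofMul x)

theorem commExponent_zpow_right (hc : IsInfiniteCyclicGenerator c) (x y : G) (n : ℤ) :
    commExponent c x (y ^ n) = n * commExponent c x y := by
  rw [hc.commExponent_swap, hc.commExponent_zpow_left, hc.commExponent_swap y]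
  ring

theorem commExponent_inv_left (hc : IsInfiniteCyclicGenerator c) (x y : G) :
    commExponent c x⁻¹ y = -commExponent c x y := by
  simpa using hc.commExponent_zpow_left x y (-1)

theorem commExponent_inv_right (hc : IsInfiniteCyclicGenerator c) (x y : G) :
    commExponent c x y⁻¹ = -commExponent c x y := by
  simpa using hc.commExponent_zpow_right x y (-1)

end IsInfiniteCyclicGenerator

section Pairing

variable {a b : G}

local notation "κ" => commExponent ⁅a, b⁆

theorem commExponent_commutatorElement (hc : IsInfiniteCyclicGenerator ⁅a, b⁆) :
    κ a b = 1 :=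
  hc.commExponent_eq (zpow_one _).symm

theorem commExponent_eq_det (hgen : closure {a, b} = ⊤) (hc : IsInfiniteCyclicGenerator ⁅a, b⁆)
    (x y : G) : κ x y = κ x b * κ a y - κ a x * κ y b := by
  obtain ⟨α, β, w, hw, rfl⟩ := exists_eq_zpow_mul_zpow_mul hgen y
  simp only [hc.commExponent_mul_left, hc.commExponent_mul_right, hc.commExponent_zpow_left,
    hc.commExponent_zpow_right, hc.commExponent_self, hc.commExponent_eq_zero_of_mem_left hw,
    hc.commExponent_eq_zero_of_mem_right _ hw, hc.commExponent_swap a x,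
    commExponent_commutatorElement hc]
  ring

theorem mem_lowerCentralSeries_one_of_commExponent_eq_zero (hgen : closure {a, b} = ⊤)
    (hc : IsInfiniteCyclicGenerator ⁅a, b⁆) {z : G} (hb : κ z b = 0) (ha : κ a z = 0) :
    z ∈ γ 1 := by
  obtain ⟨α, β, w, hw, rfl⟩ := exists_eq_zpow_mul_zpow_mul hgen z
  simp only [hc.commExponent_mul_left, hc.commExponent_mul_right, hc.commExponent_zpow_left,
    hc.commExponent_zpow_right, hc.commExponent_self, hc.commExponent_eq_zero_of_mem_left hw,
    hc.commExponent_eq_zero_of_mem_right _ hw, commExponent_commutatorElement hc] at hb ha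
  obtain rfl : α = 0 := by linarith
  obtain rfl : β = 0 := by linarith
  simpa using hw

variable (ψ : G →* G)

theorem mk_map_eq_zpow (hc : IsInfiniteCyclicGenerator ⁅a, b⁆) {x : G} {j : ℤ}
    (hx : π x = π ⁅a, b⁆ ^ j) : π (ψ x) = π ⁅a, b⁆ ^ (κ (ψ a) (ψ b) * j) := by
  have hw : (⁅a, b⁆ ^ j)⁻¹ * x ∈ γ 2 := by
    rw [← eq_one_iff, ← mk'_apply, map_mul, map_inv, map_zpow, hx, inv_mul_cancel]
  have hψw : π (ψ ((⁅a, b⁆ ^ j)⁻¹ * x)) = 1 := by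
    rw [mk'_apply, eq_one_iff]
    exact map_mem_lowerCentralSeries ψ hw
  rw [show x = ⁅a, b⁆ ^ j * ((⁅a, b⁆ ^ j)⁻¹ * x) by group, map_mul, map_mul, hψw, mul_one,
    map_zpow, map_zpow, map_commutatorElement, hc.mk_commutatorElement, ← zpow_mul]

theorem commExponent_map (hc : IsInfiniteCyclicGenerator ⁅a, b⁆) (x y : G) :
    κ (ψ x) (ψ y) = κ (ψ a) (ψ b) * κ x y :=
  hc.commExponent_eq <| by
    rw [← map_commutatorElement, mk_map_eq_zpow ψ hc (hc.mk_commutatorElement x y)]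

theorem zpow_commExponent_map_mem_range_sup (hgen : closure {a, b} = ⊤)
    (hc : IsInfiniteCyclicGenerator ⁅a, b⁆) (z : G) : z ^ κ (ψ a) (ψ b) ∈ ψ.range ⊔ γ 1 := by
  have hdet := commExponent_eq_det hgen hc (ψ a) (ψ b)
  -- Cramer's rule: `κ (ψ a) (ψ b)` is the determinant of `ψ` acting on `G / γ 1`.
  set u := κ a (ψ b) * κ z b - κ (ψ b) b * κ a z
  set v := κ (ψ a) b * κ a z - κ a (ψ a) * κ z b
  have hx : (ψ (a ^ u * b ^ v))⁻¹ * z ^ κ (ψ a) (ψ b) ∈ γ 1 := by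
    refine mem_lowerCentralSeries_one_of_commExponent_eq_zero hgen hc ?_ ?_ <;>
    · simp only [map_mul, map_zpow, hc.commExponent_mul_left, hc.commExponent_mul_right,
        hc.commExponent_inv_left, hc.commExponent_inv_right, hc.commExponent_zpow_left,
        hc.commExponent_zpow_right, hdet]
      ring
  rw [show z ^ κ (ψ a) (ψ b) = ψ (a ^ u * b ^ v) * ((ψ (a ^ u * b ^ v))⁻¹ * z ^ κ (ψ a) (ψ b))
    by group]
  exact mul_mem (mem_sup_left ⟨_, rfl⟩) (mem_sup_right hx)

theorem commExponent_map_ne_zero (hc : IsInfiniteCyclicGenerator ⁅a, b⁆)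
    (hfi : ψ.range.FiniteIndex) : κ (ψ a) (ψ b) ≠ 0 := by
  obtain ⟨m, hm, -, x, hx⟩ := exists_pow_mem_of_index_ne_zero hfi.index_ne_zero a
  obtain ⟨n, hn, -, y, hy⟩ := exists_pow_mem_of_index_ne_zero hfi.index_ne_zero b
  intro hM
  have h := commExponent_map ψ hc x y
  rw [hx, hy, hM, zero_mul, ← zpow_natCast, ← zpow_natCast, hc.commExponent_zpow_left,
    hc.commExponent_zpow_right, commExponent_commutatorElement hc] at h
  have : (m : ℤ) * (n * 1) ≠ 0 := by positivity
  exact this h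

theorem mem_lowerCentralSeries_one_of_map_mem (hgen : closure {a, b} = ⊤)
    (hc : IsInfiniteCyclicGenerator ⁅a, b⁆) (hM : κ (ψ a) (ψ b) ≠ 0) {x : G} (hx : ψ x ∈ γ 1) :
    x ∈ γ 1 := by
  refine mem_lowerCentralSeries_one_of_commExponent_eq_zero hgen hc ?_ ?_
  · have h := commExponent_map ψ hc x b
    rw [hc.commExponent_eq_zero_of_mem_left hx] at h
    exact (mul_eq_zero.mp h.symm).resolve_left hM
  · have h := commExponent_map ψ hc a x
    rw [hc.commExponent_eq_zero_of_mem_right _ hx] at h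
    exact (mul_eq_zero.mp h.symm).resolve_left hM

theorem dvd_commExponent_map_left (hgen : closure {a, b} = ⊤)
    (hc : IsInfiniteCyclicGenerator ⁅a, b⁆) [hN : ψ.range.Normal] (hM : κ (ψ a) (ψ b) ≠ 0)
    (x g : G) : κ (ψ a) (ψ b) ∣ κ (ψ x) g := by
  obtain ⟨v, hv⟩ : ⁅ψ x, g⁆ ∈ ψ.range := by
    rw [show ⁅ψ x, g⁆ = ψ x * (g * (ψ x)⁻¹ * g⁻¹) by group]
    exact mul_mem ⟨x, rfl⟩ (hN.conj_mem _ (inv_mem ⟨x, rfl⟩) g)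
  have hv1 : v ∈ γ 1 := mem_lowerCentralSeries_one_of_map_mem ψ hgen hc hM
    (hv ▸ commutatorElement_mem_lowerCentralSeries_one _ _)
  obtain ⟨j, hj⟩ := mem_zpowers_iff.mp (hc.mem_zpowers v hv1)
  exact ⟨j, hc.commExponent_eq (by rw [← hv, mk_map_eq_zpow ψ hc hj.symm])⟩

theorem isUnit_commExponent_map (hgen : closure {a, b} = ⊤)
    (hc : IsInfiniteCyclicGenerator ⁅a, b⁆) [ψ.range.Normal] (hfi : ψ.range.FiniteIndex) :
    IsUnit (κ (ψ a) (ψ b)) := by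
  have hM := commExponent_map_ne_zero ψ hc hfi
  have hdvd := dvd_commExponent_map_left ψ hgen hc hM
  -- `M := κ (ψ a) (ψ b)` is a `2 × 2` determinant whose four entries are multiples of `M`.
  have hsq : κ (ψ a) (ψ b) * κ (ψ a) (ψ b) ∣ κ (ψ a) (ψ b) * 1 := by
    conv_rhs => rw [mul_one, commExponent_eq_det hgen hc, hc.commExponent_swap (ψ a) a,
      hc.commExponent_swap (ψ b) a]
    exact dvd_sub (mul_dvd_mul (hdvd a b) (dvd_neg.mpr (hdvd b a)))
      (mul_dvd_mul (dvd_neg.mpr (hdvd a a)) (hdvd b b))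
  exact isUnit_of_dvd_one ((mul_dvd_mul_iff_left hM).mp hsq)

theorem range_eq_top_of_isInfiniteCyclicGenerator [Group.IsNilpotent G]
    (hgen : closure {a, b} = ⊤) (hc : IsInfiniteCyclicGenerator ⁅a, b⁆) [ψ.range.Normal]
    (hfi : ψ.range.FiniteIndex) : ψ.range = ⊤ := by
  refine eq_top_of_sup_commutator_eq_top (eq_top_iff.mpr fun z _ => ?_)
  have hz := zpow_mem (zpow_commExponent_map_mem_range_sup ψ hgen hc z) (κ (ψ a) (ψ b))
  rwa [← zpow_mul, Int.isUnit_mul_self (isUnit_commExponent_map ψ hgen hc hfi), zpow_one] at hz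

end Pairing

end

theorem stmt_15 {G : Type*} [Group G] [Group.IsNilpotent G]
    (htf : ∀ g : G, g ≠ 1 → ¬IsOfFinOrder g)
    (a b : G) (hgen : Subgroup.closure {a, b} = ⊤)
    (H : Subgroup G) (hnormal : H.Normal) (hproper : H ≠ ⊤)
    (hfi : H.FiniteIndex) (hiso : Nonempty (H ≃* G)) :
    ∀ x y : G, x * y = y * x := by
  intro x y
  by_cases hc : IsOfFinOrder (mk' ((⊤ : Subgroup G).lowerCentralSeries 2) ⁅a, b⁆)
  · have hxy := commutatorElement_mem_lowerCentralSeries_one x y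
    rw [lowerCentralSeries_one_eq_bot_of_isOfFinOrder htf hgen hc, mem_bot] at hxy
    exact commutatorElement_eq_one_iff_mul_comm.mp hxy
  · obtain ⟨e⟩ := hiso
    have hrange : (H.subtype.comp e.symm.toMonoidHom).range = H := by
      rw [MonoidHom.range_comp, MonoidHom.range_eq_top.mpr e.symm.surjective,
        ← MonoidHom.range_eq_map, range_subtype]
    rw [← hrange] at hnormal hfi hproper
    exact absurd (range_eq_top_of_isInfiniteCyclicGenerator _ hgen
      ⟨hc, fun v hv => mk_mem_zpowers_of_mem_lowerCentralSeries_one hgen hv⟩ hfi) hproper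
end

section
/- Let G be a finitely generated torsion-free nilpotent group, H ≤ G of finite index, and f : H → G a monomorphism such that the induced map Z(H) → Z(G) has trivial f-core in the sense that no nontrivial subgroup of Z(H) normal in G is f-invariant. Then f itself is simple: no nontrivial subgroup K ≤ H normal in G satisfies f(K) ≤ K. -/
/-!
Let `A` be the last nontrivial term of the lower central series of `K` (taken inside `K`): it is
abelian, normal in `G` and `f`-invariant. Inside `A` descend by `C₀ = A` and
`Cⱼ₊₁ = {x ∈ A | xⁿ ∈ ⁅G, Cⱼ⁆ for some n > 0}`. As every element of `G` has a power in `H`,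
nilpotency shows that `⁅G, Cⱼ⁆` and `⁅H, Cⱼ⁆` have the same isolator in `A`; since
`f ⁅H, Cⱼ⁆ ≤ ⁅G, Cⱼ⁆`, every `Cⱼ` is `f`-invariant. Comparing with the lower central series of
`G` and using torsion-freeness, the chain reaches `1`, so its last nontrivial term is central in
`G`, hence lies in `Z(H)`, contradicting the hypothesis on the centre.
-/

open scoped commutatorElement

namespace Subgroup

variable {G : Type*} [Group G]

theorem commutatorElement_mem_of_normal {N : Subgroup G} [N.Normal] (g : G) {a : G}
    (ha : a ∈ N) : ⁅g, a⁆ ∈ N :=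
  commutator_le_right ⊤ N (commutator_mem_commutator (mem_top g) ha)

section AbelianNormal

variable {A : Subgroup G} [A.Normal] [IsMulCommutative A] {a b c : G}

theorem commutatorElement_mul_right_of_mem (g : G) (ha : a ∈ A) (hb : b ∈ A) :
    ⁅g, a * b⁆ = ⁅g, a⁆ * ⁅g, b⁆ := by
  have hcomm : a * ⁅g, b⁆ = ⁅g, b⁆ * a :=
    setLike_mul_comm ha (commutatorElement_mem_of_normal g hb)
  calc ⁅g, a * b⁆ = ⁅g, a⁆ * (a * ⁅g, b⁆ * a⁻¹) := by group
    _ = ⁅g, a⁆ * ⁅g, b⁆ := by rw [hcomm, mul_inv_cancel_right]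

theorem commutatorElement_pow_right_of_mem (g : G) (ha : a ∈ A) (n : ℕ) :
    ⁅g, a ^ n⁆ = ⁅g, a⁆ ^ n := by
  induction n with
  | zero => simp
  | succ n ih =>
    rw [pow_succ, commutatorElement_mul_right_of_mem g (A.pow_mem ha n) ha, ih, pow_succ]

theorem inv_commutatorElement_pow_mul_mem {T : Subgroup G} (g : G) (hc : c ∈ A)
    (hT : ∀ k : ℕ, ⁅g, ⁅g ^ k, c⁆⁆ ∈ T) (k : ℕ) : (⁅g, c⁆ ^ k)⁻¹ * ⁅g ^ k, c⁆ ∈ T := by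
  induction k with
  | zero => simp
  | succ k ih =>
    have hk : ⁅g ^ k, c⁆ ∈ A := commutatorElement_mem_of_normal _ hc
    have hcomm : ⁅g, ⁅g ^ k, c⁆⁆ * ⁅g, c⁆ ^ (k + 1) = ⁅g, c⁆ ^ (k + 1) * ⁅g, ⁅g ^ k, c⁆⁆ :=
      setLike_mul_comm (commutatorElement_mem_of_normal g hk)
        (A.pow_mem (commutatorElement_mem_of_normal g hc) _)
    have hsucc : ⁅g ^ (k + 1), c⁆ = ⁅g, ⁅g ^ k, c⁆⁆ * ⁅g, c⁆ * ⁅g ^ k, c⁆ := by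
      rw [← commutatorElement_mul_right_of_mem g hk hc]
      group
    have : (⁅g, c⁆ ^ (k + 1))⁻¹ * ⁅g ^ (k + 1), c⁆ =
        ⁅g, ⁅g ^ k, c⁆⁆ * ((⁅g, c⁆ ^ k)⁻¹ * ⁅g ^ k, c⁆) :=
      calc (⁅g, c⁆ ^ (k + 1))⁻¹ * ⁅g ^ (k + 1), c⁆
          = (⁅g, c⁆ ^ (k + 1))⁻¹ * (⁅g, ⁅g ^ k, c⁆⁆ * ⁅g, c⁆ ^ (k + 1)) *
              ((⁅g, c⁆ ^ k)⁻¹ * ⁅g ^ k, c⁆) := by rw [hsucc]; group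
        _ = ⁅g, ⁅g ^ k, c⁆⁆ * ((⁅g, c⁆ ^ k)⁻¹ * ⁅g ^ k, c⁆) := by rw [hcomm]; group
    rw [this]
    exact T.mul_mem (hT k) ih

end AbelianNormal

theorem commutator_subgroupOf {H X Y : Subgroup G} (hX : X ≤ H) (hY : Y ≤ H) :
    ⁅X, Y⁆.subgroupOf H = ⁅X.subgroupOf H, Y.subgroupOf H⁆ := by
  have hXY : ⁅X, Y⁆ ≤ H := (commutator_mono hX hY).trans H.commutator_le_self
  apply map_injective H.subtype_injective
  rw [map_commutator, subgroupOf_map_subtype, subgroupOf_map_subtype, subgroupOf_map_subtype,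
    inf_of_le_left hX, inf_of_le_left hY, inf_of_le_left hXY]

theorem map_subgroupOf_commutator_le {G' : Type*} [Group G'] {H X Y : Subgroup G} (f : H →* G')
    {X' Y' : Subgroup G'} (hX : X ≤ H) (hY : Y ≤ H) (hXf : (X.subgroupOf H).map f ≤ X')
    (hYf : (Y.subgroupOf H).map f ≤ Y') : (⁅X, Y⁆.subgroupOf H).map f ≤ ⁅X', Y'⁆ := by
  rw [commutator_subgroupOf hX hY, map_commutator]
  exact commutator_mono hXf hYf

theorem map_subgroupOf_le_iff {H N : Subgroup G} (f : H →* G) (hNH : N ≤ H) :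
    (N.subgroupOf H).map f ≤ N ↔ ∀ x (hx : x ∈ N), f ⟨x, hNH hx⟩ ∈ N := by
  rw [map_le_iff_le_comap]
  exact ⟨fun h x hx => h hx, fun h x hx => h x hx⟩

theorem center_inf_le_map_subtype_center (H : Subgroup G) :
    center G ⊓ H ≤ (center H).map H.subtype := fun x hx =>
  ⟨⟨x, hx.2⟩, mem_center_iff.mpr fun h => Subtype.ext (mem_center_iff.mp hx.1 h), rfl⟩

theorem map_subgroupOf_lowerCentralSeries_le {H K : Subgroup G} (f : H →* G) (hKH : K ≤ H)
    (hKf : (K.subgroupOf H).map f ≤ K) :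
    ∀ n, ((K.lowerCentralSeries n).subgroupOf H).map f ≤ K.lowerCentralSeries n
  | 0 => hKf
  | n + 1 => map_subgroupOf_commutator_le f ((K.lowerCentralSeries_le_self n).trans hKH) hKH
      (map_subgroupOf_lowerCentralSeries_le f hKH hKf n) hKf

theorem exists_lowerCentralSeries_ne_bot_isMulCommutative [Group.IsNilpotent G] {K : Subgroup G}
    (hK : K ≠ ⊥) :
    ∃ t, K.lowerCentralSeries t ≠ ⊥ ∧ IsMulCommutative (K.lowerCentralSeries t) := by
  obtain ⟨n, hn⟩ := nilpotent_iff_lowerCentralSeries.mp ‹Group.IsNilpotent G›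
  have hKn : K.lowerCentralSeries n = ⊥ := eq_bot_iff.mpr (hn ▸ lowerCentralSeries_mono n le_top)
  obtain ⟨t, ht, ht1⟩ := Nat.exists_not_and_succ_of_not_zero_of_exists
    (p := fun j => K.lowerCentralSeries j = ⊥) hK ⟨n, hKn⟩
  refine ⟨t, ht, le_centralizer_iff_isMulCommutative.mp ?_⟩
  have hcent : K.lowerCentralSeries t ≤ centralizer K :=
    commutator_eq_bot_iff_le_centralizer.mp ht1
  exact hcent.trans (centralizer_le (K.lowerCentralSeries_le_self t))

section Isolator

variable (A : Subgroup G) [IsMulCommutative A] {S T : Subgroup G}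

/-- The isolator of `S ⊓ A` in the abelian group `A`. -/
def relIsolator (S : Subgroup G) : Subgroup G where
  carrier := {x | x ∈ A ∧ ∃ n, 0 < n ∧ x ^ n ∈ S}
  one_mem' := ⟨A.one_mem, 1, one_pos, by simp⟩
  mul_mem' := by
    rintro x y ⟨hxA, n, hn, hxn⟩ ⟨hyA, m, hm, hym⟩
    refine ⟨A.mul_mem hxA hyA, n * m, Nat.mul_pos hn hm, ?_⟩
    have hxy : Commute x y := setLike_mul_comm hxA hyA
    rw [hxy.mul_pow, pow_mul, mul_comm n m, pow_mul]
    exact S.mul_mem (S.pow_mem hxn m) (S.pow_mem hym n)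
  inv_mem' := by
    rintro x ⟨hxA, n, hn, hxn⟩
    exact ⟨A.inv_mem hxA, n, hn, by rw [inv_pow]; exact S.inv_mem hxn⟩

variable {A}

theorem relIsolator_le : A.relIsolator S ≤ A := fun _ hx => hx.1

theorem le_relIsolator (hSA : S ≤ A) (hST : S ≤ T) : S ≤ A.relIsolator T := fun x hx =>
  ⟨hSA hx, 1, one_pos, by simpa using hST hx⟩

theorem relIsolator_mono (h : S ≤ T) : A.relIsolator S ≤ A.relIsolator T := fun _ hx =>
  ⟨hx.1, hx.2.imp fun _ hn => ⟨hn.1, h hn.2⟩⟩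

theorem relIsolator_relIsolator : A.relIsolator (A.relIsolator S) = A.relIsolator S := by
  refine le_antisymm ?_ (le_relIsolator relIsolator_le le_rfl)
  rintro x ⟨hxA, n, hn, -, m, hm, hxnm⟩
  exact ⟨hxA, n * m, Nat.mul_pos hn hm, by rwa [pow_mul]⟩

theorem relIsolator_bot (htf : ∀ g : G, g ≠ 1 → ¬IsOfFinOrder g) : A.relIsolator ⊥ = ⊥ :=
  eq_bot_iff.mpr fun x ⟨_, n, hn, hxn⟩ =>
    mem_bot.mpr <| not_not.mp fun hx => htf x hx (isOfFinOrder_iff_pow_eq_one.mpr ⟨n, hn, hxn⟩)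

instance relIsolator_normal [A.Normal] [S.Normal] : (A.relIsolator S).Normal where
  conj_mem x := fun ⟨hxA, n, hn, hxn⟩ g =>
    ⟨‹A.Normal›.conj_mem x hxA g, n, hn, by rw [conj_pow]; exact ‹S.Normal›.conj_mem _ hxn g⟩

theorem commutator_relIsolator_le [A.Normal] (X : Subgroup G) :
    ⁅X, A.relIsolator S⁆ ≤ A.relIsolator ⁅X, S⁆ :=
  commutator_le.mpr fun g hg _ ⟨hcA, n, hn, hcn⟩ =>
    ⟨commutatorElement_mem_of_normal g hcA, n, hn, by
      rw [← commutatorElement_pow_right_of_mem g hcA]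
      exact commutator_mem_commutator hg hcn⟩

theorem map_subgroupOf_relIsolator_le {H : Subgroup G} (f : H →* G)
    (hAf : (A.subgroupOf H).map f ≤ A) :
    ((A.relIsolator S).subgroupOf H).map f ≤ A.relIsolator ((S.subgroupOf H).map f) := by
  rintro _ ⟨x, ⟨hxA, n, hn, hxn⟩, rfl⟩
  exact ⟨hAf ⟨x, hxA, rfl⟩, n, hn, x ^ n, hxn, map_pow f x n⟩

theorem commutator_top_le_relIsolator_commutator [Group.IsNilpotent G] {H : Subgroup G}
    [H.FiniteIndex] [A.Normal] [S.Normal] (hSA : S ≤ A) :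
    ⁅(⊤ : Subgroup G), S⁆ ≤ A.relIsolator ⁅H, S⁆ := by
  set T := A.relIsolator ⁅H, S⁆
  suffices ∀ i, ∀ c ∈ S, c ∈ upperCentralSeries G i → ∀ g, ⁅g, c⁆ ∈ T by
    obtain ⟨n, hn⟩ := Group.IsNilpotent.nilpotent G
    exact commutator_le.mpr fun g _ c hc => this n c hc (hn ▸ mem_top c) g
  intro i
  induction i with
  | zero =>
    intro c _ hc g
    rw [upperCentralSeries_zero, mem_bot] at hc
    simp [hc]
  | succ i ih =>
    intro c hcS hc g
    obtain ⟨m, hm, -, hgm⟩ :=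
      exists_pow_mem_of_index_ne_zero (FiniteIndex.index_ne_zero (H := H)) g
    have hdouble (k : ℕ) : ⁅g, ⁅g ^ k, c⁆⁆ ∈ T := by
      refine ih _ (commutatorElement_mem_of_normal _ hcS) ?_ g
      rw [← commutatorElement_inv]
      exact inv_mem (mem_upperCentralSeries_succ_iff.mp hc _)
    have hgen : ⁅g ^ m, c⁆ ∈ T :=
      le_relIsolator ((commutator_le_right H S).trans hSA) le_rfl
        (commutator_mem_commutator hgm hcS)
    -- `⁅g ^ m, c⁆ ∈ ⁅H, S⁆` differs from `⁅g, c⁆ ^ m` by double commutators, which lie one step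
    -- lower in the upper central series
    have hpow : ⁅g, c⁆ ^ m ∈ T := by
      have h := T.mul_mem hgen
        (T.inv_mem (inv_commutatorElement_pow_mul_mem g (hSA hcS) hdouble m))
      rwa [mul_inv_rev, inv_inv, mul_inv_cancel_left] at h
    have hT : A.relIsolator T = T := relIsolator_relIsolator
    rw [← hT]
    exact ⟨commutatorElement_mem_of_normal g (hSA hcS), m, hm, hpow⟩

end Isolator

section IsolatedCommutatorSeries

variable (A : Subgroup G) [IsMulCommutative A]

def isolatedCommutatorSeries : ℕ → Subgroup G
  | 0 => A
  | n + 1 => A.relIsolator ⁅(⊤ : Subgroup G), isolatedCommutatorSeries n⁆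

theorem isolatedCommutatorSeries_le : ∀ n, A.isolatedCommutatorSeries n ≤ A
  | 0 => le_rfl
  | _ + 1 => relIsolator_le

instance isolatedCommutatorSeries_normal [A.Normal] (n : ℕ) :
    (A.isolatedCommutatorSeries n).Normal := by
  induction n with
  | zero => exact ‹A.Normal›
  | succ n _ => exact relIsolator_normal

theorem isolatedCommutatorSeries_le_relIsolator_lowerCentralSeries [A.Normal] :
    ∀ n, A.isolatedCommutatorSeries n ≤ A.relIsolator ((⊤ : Subgroup G).lowerCentralSeries n)
  | 0 => le_relIsolator le_rfl le_top
  | n + 1 => calc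
      A.relIsolator ⁅⊤, A.isolatedCommutatorSeries n⁆
        ≤ A.relIsolator ⁅⊤, A.relIsolator ((⊤ : Subgroup G).lowerCentralSeries n)⁆ :=
          relIsolator_mono (commutator_mono le_rfl
            (isolatedCommutatorSeries_le_relIsolator_lowerCentralSeries n))
      _ ≤ A.relIsolator ((⊤ : Subgroup G).lowerCentralSeries (n + 1)) := by
          rw [lowerCentralSeries_succ, commutator_comm _ ⊤]
          exact (relIsolator_mono (commutator_relIsolator_le ⊤)).trans_eq
            relIsolator_relIsolator

theorem exists_isolatedCommutatorSeries_eq_bot [A.Normal] [Group.IsNilpotent G]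
    (htf : ∀ g : G, g ≠ 1 → ¬IsOfFinOrder g) : ∃ n, A.isolatedCommutatorSeries n = ⊥ := by
  obtain ⟨n, hn⟩ := nilpotent_iff_lowerCentralSeries.mp ‹Group.IsNilpotent G›
  refine ⟨n, eq_bot_iff.mpr ?_⟩
  simpa [hn, relIsolator_bot htf] using
    A.isolatedCommutatorSeries_le_relIsolator_lowerCentralSeries n

theorem exists_isolatedCommutatorSeries_ne_bot_le_center [A.Normal] [Group.IsNilpotent G]
    (htf : ∀ g : G, g ≠ 1 → ¬IsOfFinOrder g) (hA : A ≠ ⊥) :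
    ∃ n, A.isolatedCommutatorSeries n ≠ ⊥ ∧ A.isolatedCommutatorSeries n ≤ center G := by
  obtain ⟨n, hn, hn1⟩ := Nat.exists_not_and_succ_of_not_zero_of_exists
    (p := fun j => A.isolatedCommutatorSeries j = ⊥) hA
    (A.exists_isolatedCommutatorSeries_eq_bot htf)
  refine ⟨n, hn, commutator_top_left_eq_bot_iff_le_center.mp (eq_bot_iff.mpr ?_)⟩
  rw [← hn1]
  exact le_relIsolator ((commutator_le_right _ _).trans (A.isolatedCommutatorSeries_le n)) le_rfl

theorem map_subgroupOf_isolatedCommutatorSeries_le [A.Normal] [Group.IsNilpotent G]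
    {H : Subgroup G} [H.FiniteIndex] (f : H →* G) (hAH : A ≤ H)
    (hAf : (A.subgroupOf H).map f ≤ A) :
    ∀ n, ((A.isolatedCommutatorSeries n).subgroupOf H).map f ≤ A.isolatedCommutatorSeries n
  | 0 => hAf
  | n + 1 => by
    set C := A.isolatedCommutatorSeries n
    have hCH : C ≤ H := (A.isolatedCommutatorSeries_le n).trans hAH
    have hiso : A.relIsolator ⁅(⊤ : Subgroup G), C⁆ ≤ A.relIsolator ⁅H, C⁆ := by
      rw [← relIsolator_relIsolator (S := ⁅H, C⁆)]
      exact relIsolator_mono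
        (commutator_top_le_relIsolator_commutator (A.isolatedCommutatorSeries_le n))
    calc ((A.relIsolator ⁅(⊤ : Subgroup G), C⁆).subgroupOf H).map f
        ≤ ((A.relIsolator ⁅H, C⁆).subgroupOf H).map f := map_mono (subgroupOf_mono H hiso)
      _ ≤ A.relIsolator ((⁅H, C⁆.subgroupOf H).map f) := map_subgroupOf_relIsolator_le f hAf
      _ ≤ A.relIsolator ⁅⊤, C⁆ := relIsolator_mono (map_subgroupOf_commutator_le f le_rfl hCH
          le_top (map_subgroupOf_isolatedCommutatorSeries_le f hAH hAf n))

end IsolatedCommutatorSeries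

end Subgroup

theorem stmt_19_general {G : Type*} [Group G] [Group.IsNilpotent G]
    (htf : ∀ g : G, g ≠ 1 → ¬IsOfFinOrder g)
    (H : Subgroup G) (hH : H.FiniteIndex)
    (f : H →* G)
    (hcenter : ∀ N : Subgroup G, (hNH : N ≤ H) →
      N ≤ Subgroup.map H.subtype (Subgroup.center H) → N.Normal →
      (∀ x : G, (hx : x ∈ N) → f ⟨x, hNH hx⟩ ∈ N) → N = ⊥) :
    ∀ K : Subgroup G, (hKH : K ≤ H) → K.Normal →
      (∀ x : G, (hx : x ∈ K) → f ⟨x, hKH hx⟩ ∈ K) → K = ⊥ := by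
  intro K hKH hKn hKf
  by_contra hK0
  obtain ⟨t, hAt, hAcomm⟩ := Subgroup.exists_lowerCentralSeries_ne_bot_isMulCommutative hK0
  set A := K.lowerCentralSeries t
  have hAH : A ≤ H := (K.lowerCentralSeries_le_self t).trans hKH
  have hAf : (A.subgroupOf H).map f ≤ A := Subgroup.map_subgroupOf_lowerCentralSeries_le f hKH
    ((Subgroup.map_subgroupOf_le_iff f hKH).mpr hKf) t
  obtain ⟨s, hCs, hCcenter⟩ := A.exists_isolatedCommutatorSeries_ne_bot_le_center htf hAt
  set C := A.isolatedCommutatorSeries s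
  have hCH : C ≤ H := (A.isolatedCommutatorSeries_le s).trans hAH
  refine hCs (hcenter C hCH ?_ inferInstance ?_)
  · exact (le_inf hCcenter hCH).trans H.center_inf_le_map_subtype_center
  · exact (Subgroup.map_subgroupOf_le_iff f hCH).mp
      (A.map_subgroupOf_isolatedCommutatorSeries_le f hAH hAf s)

theorem stmt_19 {G : Type*} [Group G] [Group.IsNilpotent G] (hfg : Group.FG G)
    (htf : ∀ g : G, g ≠ 1 → ¬IsOfFinOrder g)
    (H : Subgroup G) (hH : H.FiniteIndex)
    (f : H →* G) (hf : Function.Injective f)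
    (hcenter : ∀ N : Subgroup G, (hNH : N ≤ H) →
      N ≤ Subgroup.map H.subtype (Subgroup.center H) → N.Normal →
      (∀ x : G, (hx : x ∈ N) → f ⟨x, hNH hx⟩ ∈ N) → N = ⊥) :
    ∀ K : Subgroup G, (hKH : K ≤ H) → K.Normal →
      (∀ x : G, (hx : x ∈ K) → f ⟨x, hKH hx⟩ ∈ K) → K = ⊥ :=
  stmt_19_general htf H hH f hcenter
end
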